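/- arXiv:2305.01228 — 8 statements merged into one kernel-verified Lean document; each statement's English description precedes it below -/
import Mathlib

section
/- (Generalized Young convolution inequality.) Let p ∈ ℕ with p ≥ 2, let f₁, f₂, …, f_p : ℤ^d → [0,∞] and g₂, g₃, …, g_p : ℤ^d → [0,∞] be functions, and let λ₁, …, λ_p ∈ [1,∞] and Λ₂, …, Λ_p ∈ [1,∞] satisfy 1/λ₁ + 1/λ₂ + 1/Λ₂ = 2 and 1/λ_k + 1/Λ_k = 1 for 3 ≤ k ≤ p. Define T_p(ξ₁,…,ξ_p) = ∏_{i=1}^p f_i(ξ_i) · ∏_{j=2}^p g_j(ξ₁ + ⋯ + ξ_j) for (ξ₁,…,ξ_p) ∈ (ℤ^d)^p. Then ∑_{(ξ₁,…,ξ_p)∈(ℤ^d)^p} T_p(ξ₁,…,ξ_p) ≤ ∏_{i=1}^p ‖f_i‖_{ℓ^{λ_i}(ℤ^d)} · ∏_{j=2}^p ‖g_j‖_{ℓ^{Λ_j}(ℤ^d)}. -/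
open scoped ENNReal

/-- The `ℓ^p(ℤ^d)` "norm" of a `[0,∞]`-valued function, for `p ∈ [1,∞]`. -/
noncomputable def ennLpNorm {ι : Type*} (g : ι → ℝ≥0∞) (p : ℝ≥0∞) : ℝ≥0∞ :=
  if p = ∞ then ⨆ i, g i else (∑' i, g i ^ p.toReal) ^ (1 / p.toReal)

lemma tsum_holder {ι : Type*} (u v : ι → ℝ≥0∞) {p q : ℝ} (hpq : p.HolderConjugate q) :
    ∑' i, u i * v i ≤ (∑' i, u i ^ p) ^ (1 / p) * (∑' i, v i ^ q) ^ (1 / q) := by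
  rw [ENNReal.tsum_eq_iSup_sum]
  refine iSup_le fun s => (ENNReal.inner_le_Lp_mul_Lq s u v hpq).trans ?_
  exact mul_le_mul' (ENNReal.rpow_le_rpow (ENNReal.sum_le_tsum s) hpq.one_div_pos.le)
    (ENNReal.rpow_le_rpow (ENNReal.sum_le_tsum s) hpq.symm.one_div_pos.le)

lemma ennLpNorm_comp_equiv {ι κ : Type*} (w : ι → ℝ≥0∞) (e : κ ≃ ι) (p : ℝ≥0∞) :
    ennLpNorm (fun k => w (e k)) p = ennLpNorm w p := by
  unfold ennLpNorm
  split
  · exact e.surjective.iSup_comp w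
  · rw [e.tsum_eq (fun i => w i ^ p.toReal)]

lemma ennLpNorm_shift_left {G : Type*} [AddCommGroup G] (g : G → ℝ≥0∞) (x : G) (c : ℝ≥0∞) :
    ennLpNorm (fun y => g (x + y)) c = ennLpNorm g c :=
  ennLpNorm_comp_equiv g (Equiv.addLeft x) c

lemma ennLpNorm_shift_right {G : Type*} [AddCommGroup G] (g : G → ℝ≥0∞) (y : G) (c : ℝ≥0∞) :
    ennLpNorm (fun x => g (x + y)) c = ennLpNorm g c :=
  ennLpNorm_comp_equiv g (Equiv.addRight y) c

lemma ennLpNorm_sub_left {G : Type*} [AddCommGroup G] (g : G → ℝ≥0∞) (s : G) (c : ℝ≥0∞) :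
    ennLpNorm (fun x => g (s - x)) c = ennLpNorm g c :=
  ennLpNorm_comp_equiv g (Equiv.subLeft s) c

lemma ennLpNorm_one {ι : Type*} (u : ι → ℝ≥0∞) : ennLpNorm u 1 = ∑' i, u i := by
  simp [ennLpNorm]

lemma ennLpNorm_top {ι : Type*} (u : ι → ℝ≥0∞) : ennLpNorm u ∞ = ⨆ i, u i := if_pos rfl

lemma tsum_mul_le_ennLpNorm {ι : Type*} (u v : ι → ℝ≥0∞) {p q : ℝ≥0∞} (hp : 1 ≤ p)
    (hpq : 1 / p + 1 / q = 1) :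
    ∑' i, u i * v i ≤ ennLpNorm u p * ennLpNorm v q := by
  have hp0 : p ≠ 0 := fun h => by simp [h] at hp
  rcases eq_or_ne p 1 with rfl | hp1
  · have hq : q = ∞ := by
      have h0 : 1 / q = 0 := by
        have := hpq
        rw [one_div_one] at this
        exact (ENNReal.add_right_inj ENNReal.one_ne_top).mp (by rw [this, add_zero])
      simpa [one_div, ENNReal.inv_eq_zero] using h0
    subst hq
    rw [ennLpNorm_one, ennLpNorm_top, ← ENNReal.tsum_mul_right]
    exact ENNReal.tsum_le_tsum fun i => mul_le_mul_right (le_iSup v i) _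
  rcases eq_or_ne p ∞ with rfl | hptop
  · have hq : q = 1 := by
      have h1 : 1 / q = 1 := by simpa using hpq
      rwa [one_div, ENNReal.inv_eq_one] at h1
    subst hq
    rw [ennLpNorm_one, ennLpNorm_top, ← ENNReal.tsum_mul_left]
    exact ENNReal.tsum_le_tsum fun i => mul_le_mul_left (le_iSup u i) _
  · have hq0 : q ≠ 0 := by
      rintro rfl
      rw [ENNReal.div_zero one_ne_zero] at hpq
      simp at hpq
    have hqtop : q ≠ ∞ := by
      rintro rfl
      rw [ENNReal.div_top, add_zero, ENNReal.div_eq_one_iff hp0 hptop] at hpq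
      exact hp1 hpq.symm
    have hptr : 1 < p.toReal := by
      rw [← ENNReal.toReal_one]
      exact (ENNReal.toReal_lt_toReal ENNReal.one_ne_top hptop).mpr (lt_of_le_of_ne hp (Ne.symm hp1))
    have hsum : p.toReal⁻¹ + q.toReal⁻¹ = 1 := by
      have := congrArg ENNReal.toReal hpq
      rw [ENNReal.toReal_add (by simp [hp0]) (by simp [hq0]), one_div, one_div,
        ENNReal.toReal_inv, ENNReal.toReal_inv, ENNReal.toReal_one] at this
      simpa using this
    have hconj : p.toReal.HolderConjugate q.toReal := Real.holderConjugate_iff.mpr ⟨hptr, hsum⟩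
    refine (tsum_holder u v hconj).trans_eq ?_
    rw [ennLpNorm, ennLpNorm, if_neg hptop, if_neg hqtop]

lemma aux_eq_one {x y : ℝ≥0∞} (hx : x ≤ 1) (hy : y ≤ 1) (h : x + y = 2) : x = 1 := by
  refine le_antisymm hx ?_
  have : (1 : ℝ≥0∞) + 1 ≤ x + 1 := by
    rw [one_add_one_eq_two, ← h]
    exact add_le_add_right hy x
  exact (ENNReal.add_le_add_iff_right ENNReal.one_ne_top).mp this

lemma one_div_le_one_of_one_le {x : ℝ≥0∞} (hx : 1 ≤ x) : 1 / x ≤ 1 := by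
  rw [one_div]
  exact ENNReal.inv_le_one.mpr hx

lemma hmulpow (t : ℝ≥0∞) {s1 s2 : ℝ} (h1 : 0 ≤ s1) (h2 : 0 ≤ s2) (h : s1 + s2 = 1) :
    t ^ s1 * t ^ s2 = t := by
  rw [← ENNReal.rpow_add_of_nonneg _ _ h1 h2, h, ENNReal.rpow_one]

set_option maxHeartbeats 1000000 in
lemma young2_core {G : Type*} [AddCommGroup G] (f₁ f₂ g : G → ℝ≥0∞) {a b c : ℝ≥0∞}
    (ha : 1 < a) (hb : 1 < b) (hc : 1 < c)
    (hat : a ≠ ∞) (hbt : b ≠ ∞) (hct : c ≠ ∞)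
    (habc : 1 / a + 1 / b + 1 / c = 2) :
    ∑' z : G × G, f₁ z.1 * f₂ z.2 * g (z.1 + z.2)
      ≤ ennLpNorm f₁ a * ennLpNorm f₂ b * ennLpNorm g c := by
  set α := a.toReal with hαdef
  set β := b.toReal with hβdef
  set γ := c.toReal with hγdef
  have hα : 1 < α := by
    rw [hαdef, ← ENNReal.toReal_one]
    exact (ENNReal.toReal_lt_toReal ENNReal.one_ne_top hat).mpr ha
  have hβ : 1 < β := by
    rw [hβdef, ← ENNReal.toReal_one]
    exact (ENNReal.toReal_lt_toReal ENNReal.one_ne_top hbt).mpr hb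
  have hγ : 1 < γ := by
    rw [hγdef, ← ENNReal.toReal_one]
    exact (ENNReal.toReal_lt_toReal ENNReal.one_ne_top hct).mpr hc
  have ha0 : a ≠ 0 := by rintro rfl; simp at ha
  have hb0 : b ≠ 0 := by rintro rfl; simp at hb
  have hc0 : c ≠ 0 := by rintro rfl; simp at hc
  set ra := 1 / α with hra
  set rb := 1 / β with hrb
  set rc := 1 / γ with hrc
  have hα0 : (0:ℝ) < α := by linarith
  have hβ0 : (0:ℝ) < β := by linarith
  have hγ0 : (0:ℝ) < γ := by linarith
  have h0a : 0 < ra := by rw [hra]; positivity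
  have h0b : 0 < rb := by rw [hrb]; positivity
  have h0c : 0 < rc := by rw [hrc]; positivity
  have h1a : ra < 1 := by rw [hra, div_lt_one hα0]; linarith
  have h1b : rb < 1 := by rw [hrb, div_lt_one hβ0]; linarith
  have h1c : rc < 1 := by rw [hrc, div_lt_one hγ0]; linarith
  have sum2 : ra + rb + rc = 2 := by
    have h1 : (1:ℝ≥0∞) / a ≠ ∞ := by simp [one_div, ha0]
    have h2 : (1:ℝ≥0∞) / b ≠ ∞ := by simp [one_div, hb0]
    have h3 : (1:ℝ≥0∞) / c ≠ ∞ := by simp [one_div, hc0]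
    have := congrArg ENNReal.toReal habc
    rw [ENNReal.toReal_add (by exact ENNReal.add_ne_top.mpr ⟨h1, h2⟩) h3,
      ENNReal.toReal_add h1 h2] at this
    simpa [one_div, ENNReal.toReal_inv, hra, hrb, hrc] using this
  -- conjugate exponent pairs
  have hmulα : α * ra = 1 := by rw [hra]; field_simp
  have hmulβ : β * rb = 1 := by rw [hrb]; field_simp
  have hmulγ : γ * rc = 1 := by rw [hrc]; field_simp
  have hconj1 : (1 / (1 - ra)).HolderConjugate (1 / ra) := by
    rw [Real.holderConjugate_iff]; constructor
    · rw [lt_div_iff₀ (by linarith)]; linarith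
    · rw [one_div, one_div, inv_inv, inv_inv]; ring
  have hconj2 : (ra / (1 - rb)).HolderConjugate (ra / (1 - rc)) := by
    rw [Real.holderConjugate_iff]; constructor
    · rw [lt_div_iff₀ (by linarith)]; linarith
    · rw [inv_div, inv_div, ← add_div, div_eq_one_iff_eq (ne_of_gt h0a)]; linarith
  -- the three auxiliary functions
  set u1 : G × G → ℝ≥0∞ := fun z => (f₂ z.2 ^ β * g (z.1 + z.2) ^ γ) ^ (1 - ra) with hu1
  set u2 : G × G → ℝ≥0∞ := fun z => (f₁ z.1 ^ α * g (z.1 + z.2) ^ γ) ^ (1 - rb) with hu2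
  set u3 : G × G → ℝ≥0∞ := fun z => (f₁ z.1 ^ α * f₂ z.2 ^ β) ^ (1 - rc) with hu3
  set A := ∑' t, f₁ t ^ α with hA
  set B := ∑' t, f₂ t ^ β with hB
  set C := ∑' t, g t ^ γ with hC
  have eA : α * (1 - rb) + α * (1 - rc) = 1 := by
    have h' : (1 - rb) + (1 - rc) = ra := by linarith
    calc α * (1 - rb) + α * (1 - rc) = α * ((1 - rb) + (1 - rc)) := by ring
      _ = α * ra := by rw [h']
      _ = 1 := hmulα
  have eB : β * (1 - ra) + β * (1 - rc) = 1 := by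
    have h' : (1 - ra) + (1 - rc) = rb := by linarith
    calc β * (1 - ra) + β * (1 - rc) = β * ((1 - ra) + (1 - rc)) := by ring
      _ = β * rb := by rw [h']
      _ = 1 := hmulβ
  have eC : γ * (1 - ra) + γ * (1 - rb) = 1 := by
    have h' : (1 - ra) + (1 - rb) = rc := by linarith
    calc γ * (1 - ra) + γ * (1 - rb) = γ * ((1 - ra) + (1 - rb)) := by ring
      _ = γ * rc := by rw [h']
      _ = 1 := hmulγ
  have hpt : ∀ z : G × G, f₁ z.1 * f₂ z.2 * g (z.1 + z.2) = u1 z * (u2 z * u3 z) := by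
    intro z
    rw [hu1, hu2, hu3]
    simp only
    rw [ENNReal.mul_rpow_of_nonneg _ _ (by linarith : (0:ℝ) ≤ 1 - ra),
      ENNReal.mul_rpow_of_nonneg _ _ (by linarith : (0:ℝ) ≤ 1 - rb),
      ENNReal.mul_rpow_of_nonneg _ _ (by linarith : (0:ℝ) ≤ 1 - rc)]
    simp only [← ENNReal.rpow_mul]
    calc f₁ z.1 * f₂ z.2 * g (z.1 + z.2)
        = (f₁ z.1 ^ (α * (1 - rb)) * f₁ z.1 ^ (α * (1 - rc))) *
            ((f₂ z.2 ^ (β * (1 - ra)) * f₂ z.2 ^ (β * (1 - rc))) *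
              (g (z.1 + z.2) ^ (γ * (1 - ra)) * g (z.1 + z.2) ^ (γ * (1 - rb)))) := by
          rw [hmulpow _ (by nlinarith) (by nlinarith) eA,
            hmulpow _ (by nlinarith) (by nlinarith) eB,
            hmulpow _ (by nlinarith) (by nlinarith) eC, mul_assoc]
      _ = _ := by ring
  have hsum1 : (∑' z : G × G, f₂ z.2 ^ β * g (z.1 + z.2) ^ γ) = B * C := by
    rw [ENNReal.tsum_prod', ENNReal.tsum_comm, hB, hC, ← ENNReal.tsum_mul_right]
    congr 1; ext y
    dsimp only
    rw [ENNReal.tsum_mul_left]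
    congr 1
    exact Equiv.tsum_eq (Equiv.addRight y) (fun t => g t ^ γ)
  have hsum2 : (∑' z : G × G, f₁ z.1 ^ α * g (z.1 + z.2) ^ γ) = A * C := by
    rw [ENNReal.tsum_prod', hA, hC, ← ENNReal.tsum_mul_right]
    congr 1; ext x
    dsimp only
    rw [ENNReal.tsum_mul_left]
    congr 1
    exact Equiv.tsum_eq (Equiv.addLeft x) (fun t => g t ^ γ)
  have hsum3 : (∑' z : G × G, f₁ z.1 ^ α * f₂ z.2 ^ β) = A * B := by
    rw [ENNReal.tsum_prod', hA, hB, ← ENNReal.tsum_mul_right]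
    congr 1; ext x
    dsimp only
    rw [ENNReal.tsum_mul_left]
  have hT1 : ∑' z : G × G, u1 z ^ (1 / (1 - ra)) = B * C := by
    rw [← hsum1]
    congr 1; ext z
    rw [hu1]
    simp only
    rw [← ENNReal.rpow_mul, mul_one_div_cancel (by linarith : (1:ℝ) - ra ≠ 0),
      ENNReal.rpow_one]
  have hT2 : ∑' z : G × G, (u2 z ^ (1 / ra)) ^ (ra / (1 - rb)) = A * C := by
    rw [← hsum2]
    congr 1; ext z
    rw [hu2]
    simp only
    rw [← ENNReal.rpow_mul, ← ENNReal.rpow_mul,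
      show (1 - rb) * (1 / ra * (ra / (1 - rb))) = 1 by
        field_simp
        exact div_self (ne_of_gt (by linarith)), ENNReal.rpow_one]
  have hT3 : ∑' z : G × G, (u3 z ^ (1 / ra)) ^ (ra / (1 - rc)) = A * B := by
    rw [← hsum3]
    congr 1; ext z
    rw [hu3]
    simp only
    rw [← ENNReal.rpow_mul, ← ENNReal.rpow_mul,
      show (1 - rc) * (1 / ra * (ra / (1 - rc))) = 1 by
        field_simp
        exact div_self (ne_of_gt (by linarith)), ENNReal.rpow_one]
  have step2 : (∑' z : G × G, (u2 z * u3 z) ^ (1 / ra)) ^ (1 / (1 / ra))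
      ≤ (A * C) ^ (1 - rb) * (A * B) ^ (1 - rc) := by
    have expand : ∀ z : G × G, (u2 z * u3 z) ^ (1 / ra) =
        u2 z ^ (1 / ra) * u3 z ^ (1 / ra) := fun z =>
      ENNReal.mul_rpow_of_nonneg _ _ (by positivity)
    calc (∑' z : G × G, (u2 z * u3 z) ^ (1 / ra)) ^ (1 / (1 / ra))
        ≤ ((∑' z : G × G, (u2 z ^ (1 / ra)) ^ (ra / (1 - rb))) ^ (1 / (ra / (1 - rb))) *
            (∑' z : G × G, (u3 z ^ (1 / ra)) ^ (ra / (1 - rc))) ^ (1 / (ra / (1 - rc)))) ^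
              (1 / (1 / ra)) := by
          refine ENNReal.rpow_le_rpow ?_ (by positivity)
          simp_rw [expand]
          exact tsum_holder _ _ hconj2
      _ = (A * C) ^ (1 - rb) * (A * B) ^ (1 - rc) := by
          rw [hT2, hT3, ENNReal.mul_rpow_of_nonneg _ _ (by positivity),
            ← ENNReal.rpow_mul, ← ENNReal.rpow_mul,
            show 1 / (ra / (1 - rb)) * (1 / (1 / ra)) = 1 - rb by field_simp,
            show 1 / (ra / (1 - rc)) * (1 / (1 / ra)) = 1 - rc by field_simp]
  have main : ∑' z : G × G, f₁ z.1 * f₂ z.2 * g (z.1 + z.2)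
      ≤ (B * C) ^ (1 - ra) * ((A * C) ^ (1 - rb) * (A * B) ^ (1 - rc)) := by
    calc ∑' z : G × G, f₁ z.1 * f₂ z.2 * g (z.1 + z.2)
        = ∑' z : G × G, u1 z * (u2 z * u3 z) := tsum_congr hpt
      _ ≤ (∑' z : G × G, u1 z ^ (1 / (1 - ra))) ^ (1 / (1 / (1 - ra))) *
            (∑' z : G × G, (u2 z * u3 z) ^ (1 / ra)) ^ (1 / (1 / ra)) := by
          have := tsum_holder u1 (fun z => u2 z * u3 z) hconj1
          simpa [one_div_one_div] using this
      _ ≤ (B * C) ^ (1 - ra) * ((A * C) ^ (1 - rb) * (A * B) ^ (1 - rc)) := by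
          rw [hT1, one_div_one_div]
          exact mul_le_mul_right step2 _
  refine main.trans_eq ?_
  rw [ennLpNorm, ennLpNorm, ennLpNorm, if_neg hat, if_neg hbt, if_neg hct]
  rw [ENNReal.mul_rpow_of_nonneg _ _ (by linarith : (0:ℝ) ≤ 1 - ra),
    ENNReal.mul_rpow_of_nonneg _ _ (by linarith : (0:ℝ) ≤ 1 - rb),
    ENNReal.mul_rpow_of_nonneg _ _ (by linarith : (0:ℝ) ≤ 1 - rc)]
  calc B ^ (1 - ra) * C ^ (1 - ra) * (A ^ (1 - rb) * C ^ (1 - rb) * (A ^ (1 - rc) * B ^ (1 - rc)))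
      = (A ^ (1 - rb) * A ^ (1 - rc)) * ((B ^ (1 - ra) * B ^ (1 - rc)) *
          (C ^ (1 - ra) * C ^ (1 - rb))) := by ring
    _ = A ^ ra * (B ^ rb * C ^ rc) := by
        rw [← ENNReal.rpow_add_of_nonneg (x := A) _ _ (by linarith) (by linarith),
          ← ENNReal.rpow_add_of_nonneg (x := B) _ _ (by linarith) (by linarith),
          ← ENNReal.rpow_add_of_nonneg (x := C) _ _ (by linarith) (by linarith),
          show (1 - rb) + (1 - rc) = ra from by linarith,
          show (1 - ra) + (1 - rc) = rb from by linarith,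
          show (1 - ra) + (1 - rb) = rc from by linarith]
    _ = A ^ (1 / α) * B ^ (1 / β) * C ^ (1 / γ) := by
        rw [hra, hrb, hrc]; ring

lemma young2 {G : Type*} [AddCommGroup G] (f₁ f₂ g : G → ℝ≥0∞) {a b c : ℝ≥0∞}
    (ha : 1 ≤ a) (hb : 1 ≤ b) (hc : 1 ≤ c)
    (habc : 1 / a + 1 / b + 1 / c = 2) :
    ∑' z : G × G, f₁ z.1 * f₂ z.2 * g (z.1 + z.2)
      ≤ ennLpNorm f₁ a * ennLpNorm f₂ b * ennLpNorm g c := by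
  by_cases hA : a = 1
  · subst hA
    have hbc : 1 / b + 1 / c = 1 := by
      rw [one_div_one, add_assoc] at habc
      exact (ENNReal.add_right_inj ENNReal.one_ne_top).mp
        (habc.trans one_add_one_eq_two.symm)
    calc ∑' z : G × G, f₁ z.1 * f₂ z.2 * g (z.1 + z.2)
        = ∑' x, ∑' y, f₁ x * (f₂ y * g (x + y)) := by
          rw [ENNReal.tsum_prod']; simp_rw [mul_assoc]
      _ = ∑' x, f₁ x * ∑' y, f₂ y * g (x + y) := by
          simp_rw [ENNReal.tsum_mul_left]
      _ ≤ ∑' x, f₁ x * (ennLpNorm f₂ b * ennLpNorm g c) := by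
          refine ENNReal.tsum_le_tsum fun x => mul_le_mul_right ?_ _
          refine (tsum_mul_le_ennLpNorm f₂ (fun y => g (x + y)) hb hbc).trans_eq ?_
          rw [ennLpNorm_shift_left g x c]
      _ = ennLpNorm f₁ 1 * ennLpNorm f₂ b * ennLpNorm g c := by
          rw [ENNReal.tsum_mul_right, ennLpNorm_one, mul_assoc]
  by_cases hB : b = 1
  · subst hB
    have hac : 1 / a + 1 / c = 1 := by
      rw [one_div_one, add_right_comm] at habc
      exact (ENNReal.add_left_inj ENNReal.one_ne_top).mp
        (habc.trans one_add_one_eq_two.symm)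
    calc ∑' z : G × G, f₁ z.1 * f₂ z.2 * g (z.1 + z.2)
        = ∑' y, ∑' x, f₂ y * (f₁ x * g (x + y)) := by
          rw [ENNReal.tsum_prod', ENNReal.tsum_comm]
          congr 1; ext y; congr 1; ext x; ring
      _ = ∑' y, f₂ y * ∑' x, f₁ x * g (x + y) := by
          simp_rw [ENNReal.tsum_mul_left]
      _ ≤ ∑' y, f₂ y * (ennLpNorm f₁ a * ennLpNorm g c) := by
          refine ENNReal.tsum_le_tsum fun y => mul_le_mul_right ?_ _
          refine (tsum_mul_le_ennLpNorm f₁ (fun x => g (x + y)) ha hac).trans_eq ?_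
          rw [ennLpNorm_shift_right g y c]
      _ = ennLpNorm f₁ a * ennLpNorm f₂ 1 * ennLpNorm g c := by
          rw [ENNReal.tsum_mul_right, ennLpNorm_one]; ring
  by_cases hC : c = 1
  · subst hC
    have hab : 1 / a + 1 / b = 1 := by
      rw [one_div_one] at habc
      exact (ENNReal.add_left_inj ENNReal.one_ne_top).mp
        (habc.trans one_add_one_eq_two.symm)
    have key : ∑' z : G × G, f₁ z.1 * f₂ z.2 * g (z.1 + z.2)
        = ∑' w : G × G, f₁ w.1 * f₂ (w.2 - w.1) * g w.2 := by
      rw [← Equiv.tsum_eq (Equiv.prodShear (Equiv.refl G) (fun x => Equiv.addLeft x))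
        (fun w : G × G => f₁ w.1 * f₂ (w.2 - w.1) * g w.2)]
      congr 1; ext z
      simp [Equiv.prodShear, add_sub_cancel_left]
    calc ∑' z : G × G, f₁ z.1 * f₂ z.2 * g (z.1 + z.2)
        = ∑' s, (∑' x, f₁ x * f₂ (s - x)) * g s := by
          rw [key, ENNReal.tsum_prod', ENNReal.tsum_comm]
          simp_rw [ENNReal.tsum_mul_right]
      _ ≤ ∑' s, (ennLpNorm f₁ a * ennLpNorm f₂ b) * g s := by
          refine ENNReal.tsum_le_tsum fun s => mul_le_mul_left ?_ _
          refine (tsum_mul_le_ennLpNorm f₁ (fun x => f₂ (s - x)) ha hab).trans_eq ?_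
          rw [ennLpNorm_sub_left f₂ s b]
      _ = ennLpNorm f₁ a * ennLpNorm f₂ b * ennLpNorm g 1 := by
          rw [ENNReal.tsum_mul_left, ennLpNorm_one]
  · have hat : a ≠ ∞ := by
      rintro rfl
      rw [one_div, ENNReal.inv_top, zero_add] at habc
      have h1 := aux_eq_one (one_div_le_one_of_one_le hb) (one_div_le_one_of_one_le hc) habc
      rw [one_div, ENNReal.inv_eq_one] at h1
      exact hB h1
    have hbt : b ≠ ∞ := by
      rintro rfl
      rw [one_div (⊤ : ℝ≥0∞), ENNReal.inv_top, add_zero] at habc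
      have h1 := aux_eq_one (one_div_le_one_of_one_le ha) (one_div_le_one_of_one_le hc) habc
      rw [one_div, ENNReal.inv_eq_one] at h1
      exact hA h1
    have hct : c ≠ ∞ := by
      rintro rfl
      rw [one_div (⊤ : ℝ≥0∞), ENNReal.inv_top, add_zero] at habc
      have h1 := aux_eq_one (one_div_le_one_of_one_le ha) (one_div_le_one_of_one_le hb) habc
      rw [one_div, ENNReal.inv_eq_one] at h1
      exact hA h1
    exact young2_core f₁ f₂ g (lt_of_le_of_ne ha (Ne.symm hA)) (lt_of_le_of_ne hb (Ne.symm hB))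
      (lt_of_le_of_ne hc (Ne.symm hC)) hat hbt hct habc

theorem gen_young_aux {V : Type*} [AddCommGroup V] (p : ℕ) (hp : 2 ≤ p)
    (f g : ℕ → V → ℝ≥0∞) (lam Lam : ℕ → ℝ≥0∞)
    (hlam : ∀ i, 1 ≤ i → i ≤ p → 1 ≤ lam i)
    (hLam : ∀ j, 2 ≤ j → j ≤ p → 1 ≤ Lam j)
    (h2 : 1 / lam 1 + 1 / lam 2 + 1 / Lam 2 = 2)
    (hk : ∀ k, 3 ≤ k → k ≤ p → 1 / lam k + 1 / Lam k = 1) :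
    (∑' ξ : Fin p → V,
        (∏ i : Fin p, f ((i : ℕ) + 1) (ξ i)) *
          ∏ j ∈ Finset.Icc 2 p,
            g j (∑ i ∈ Finset.univ.filter (fun i : Fin p => (i : ℕ) + 1 ≤ j), ξ i))
      ≤ (∏ i ∈ Finset.Icc 1 p, ennLpNorm (f i) (lam i)) *
          ∏ j ∈ Finset.Icc 2 p, ennLpNorm (g j) (Lam j) := by
  induction p, hp using Nat.le_induction with
  | base =>
    have key : ∀ ξ : Fin 2 → V,
        (∏ i : Fin 2, f ((i : ℕ) + 1) (ξ i)) *
          ∏ j ∈ Finset.Icc 2 2,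
            g j (∑ i ∈ Finset.univ.filter (fun i : Fin 2 => (i : ℕ) + 1 ≤ j), ξ i)
        = f 1 (ξ 0) * f 2 (ξ 1) * g 2 (ξ 0 + ξ 1) := by
      intro ξ
      have hfil : Finset.univ.filter (fun i : Fin 2 => (i : ℕ) + 1 ≤ 2) = Finset.univ := by
        decide
      rw [Finset.Icc_self, Finset.prod_singleton, hfil, Fin.sum_univ_two, Fin.prod_univ_two]
      norm_num [mul_assoc]
    calc (∑' ξ : Fin 2 → V,
        (∏ i : Fin 2, f ((i : ℕ) + 1) (ξ i)) *
          ∏ j ∈ Finset.Icc 2 2,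
            g j (∑ i ∈ Finset.univ.filter (fun i : Fin 2 => (i : ℕ) + 1 ≤ j), ξ i))
        = ∑' z : V × V, f 1 z.1 * f 2 z.2 * g 2 (z.1 + z.2) := by
          rw [← Equiv.tsum_eq (piFinTwoEquiv (fun _ => V))
            (fun z : V × V => f 1 z.1 * f 2 z.2 * g 2 (z.1 + z.2))]
          exact tsum_congr fun ξ => key ξ
      _ ≤ ennLpNorm (f 1) (lam 1) * ennLpNorm (f 2) (lam 2) * ennLpNorm (g 2) (Lam 2) :=
          young2 (f 1) (f 2) (g 2) (hlam 1 le_rfl (by norm_num)) (hlam 2 (by norm_num) le_rfl)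
            (hLam 2 le_rfl le_rfl) h2
      _ = (∏ i ∈ Finset.Icc 1 2, ennLpNorm (f i) (lam i)) *
          ∏ j ∈ Finset.Icc 2 2, ennLpNorm (g j) (Lam j) := by
          rw [show Finset.Icc 1 2 = {1, 2} from rfl, Finset.Icc_self,
            Finset.prod_pair (by norm_num), Finset.prod_singleton]
  | succ p hp IH =>
    have IH' := IH (fun i h1 h2 => hlam i h1 (h2.trans (Nat.le_succ p)))
      (fun j h1 h2 => hLam j h1 (h2.trans (Nat.le_succ p)))
      (fun k h1 h2 => hk k h1 (h2.trans (Nat.le_succ p)))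
    set A : (Fin p → V) → ℝ≥0∞ := fun η => (∏ i : Fin p, f ((i : ℕ) + 1) (η i)) *
      ∏ j ∈ Finset.Icc 2 p,
        g j (∑ i ∈ Finset.univ.filter (fun i : Fin p => (i : ℕ) + 1 ≤ j), η i) with hAdef
    have key : ∀ (ζ : V) (η : Fin p → V),
        (∏ i : Fin (p + 1), f ((i : ℕ) + 1) ((Fin.snoc η ζ : Fin (p + 1) → V) i)) *
          ∏ j ∈ Finset.Icc 2 (p + 1),
            g j (∑ i ∈ Finset.univ.filter (fun i : Fin (p + 1) => (i : ℕ) + 1 ≤ j),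
              (Fin.snoc η ζ : Fin (p + 1) → V) i)
        = A η * (f (p + 1) ζ * g (p + 1) ((∑ i : Fin p, η i) + ζ)) := by
      intro ζ η
      have h1 : (∏ i : Fin (p + 1), f ((i : ℕ) + 1) ((Fin.snoc η ζ : Fin (p + 1) → V) i))
          = (∏ i : Fin p, f ((i : ℕ) + 1) (η i)) * f (p + 1) ζ := by
        rw [Fin.prod_univ_castSucc]
        simp [Fin.snoc_castSucc, Fin.snoc_last]
      have hsplit : (∏ j ∈ Finset.Icc 2 (p + 1),
            g j (∑ i ∈ Finset.univ.filter (fun i : Fin (p + 1) => (i : ℕ) + 1 ≤ j),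
              (Fin.snoc η ζ : Fin (p + 1) → V) i))
          = (∏ j ∈ Finset.Icc 2 p,
              g j (∑ i ∈ Finset.univ.filter (fun i : Fin (p + 1) => (i : ℕ) + 1 ≤ j),
                (Fin.snoc η ζ : Fin (p + 1) → V) i)) *
            g (p + 1) (∑ i ∈ Finset.univ.filter
              (fun i : Fin (p + 1) => (i : ℕ) + 1 ≤ p + 1), (Fin.snoc η ζ : Fin (p + 1) → V) i) :=
        Finset.prod_Icc_succ_top (by omega) _
      have h2 : ∀ j ∈ Finset.Icc 2 p,
          (∑ i ∈ Finset.univ.filter (fun i : Fin (p + 1) => (i : ℕ) + 1 ≤ j), (Fin.snoc η ζ : Fin (p + 1) → V) i)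
          = ∑ i ∈ Finset.univ.filter (fun i : Fin p => (i : ℕ) + 1 ≤ j), η i := by
        intro j hj
        have hjp : j ≤ p := (Finset.mem_Icc.mp hj).2
        rw [Finset.sum_filter, Finset.sum_filter, Fin.sum_univ_castSucc]
        simp only [Fin.snoc_castSucc, Fin.coe_castSucc, Fin.snoc_last, Fin.val_last]
        rw [if_neg (by omega), add_zero]
      have h3 : Finset.univ.filter (fun i : Fin (p + 1) => (i : ℕ) + 1 ≤ p + 1)
          = Finset.univ := by
        refine Finset.filter_true_of_mem fun i _ => ?_
        exact Nat.succ_le_succ (Nat.lt_succ_iff.mp i.isLt)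
      have h4 : ∑ i : Fin (p + 1), (Fin.snoc η ζ : Fin (p + 1) → V) i = (∑ i : Fin p, η i) + ζ := by
        rw [Fin.sum_univ_castSucc]
        simp
      have hprod : (∏ j ∈ Finset.Icc 2 p,
            g j (∑ i ∈ Finset.univ.filter (fun i : Fin (p + 1) => (i : ℕ) + 1 ≤ j),
              (Fin.snoc η ζ : Fin (p + 1) → V) i))
          = ∏ j ∈ Finset.Icc 2 p,
              g j (∑ i ∈ Finset.univ.filter (fun i : Fin p => (i : ℕ) + 1 ≤ j), η i) :=
        Finset.prod_congr rfl fun j hj => by rw [h2 j hj]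
      rw [h1, hsplit, hprod, h3, h4, hAdef]
      ring
    calc (∑' ξ : Fin (p + 1) → V,
        (∏ i : Fin (p + 1), f ((i : ℕ) + 1) (ξ i)) *
          ∏ j ∈ Finset.Icc 2 (p + 1),
            g j (∑ i ∈ Finset.univ.filter (fun i : Fin (p + 1) => (i : ℕ) + 1 ≤ j), ξ i))
        = ∑' w : V × (Fin p → V),
            A w.2 * (f (p + 1) w.1 * g (p + 1) ((∑ i : Fin p, w.2 i) + w.1)) := by
          rw [← Equiv.tsum_eq (Fin.insertNthEquiv (fun _ : Fin (p + 1) => V)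
            (Fin.last p))
            (fun ξ : Fin (p + 1) → V =>
              (∏ i : Fin (p + 1), f ((i : ℕ) + 1) (ξ i)) *
                ∏ j ∈ Finset.Icc 2 (p + 1),
                  g j (∑ i ∈ Finset.univ.filter
                    (fun i : Fin (p + 1) => (i : ℕ) + 1 ≤ j), ξ i))]
          refine tsum_congr fun w => ?_
          have he : (Fin.insertNthEquiv (fun _ : Fin (p + 1) => V) (Fin.last p)) w
              = (Fin.snoc w.2 w.1 : Fin (p + 1) → V) := Fin.insertNth_last' w.1 w.2
          rw [he, key w.1 w.2]
      _ = ∑' η : Fin p → V, ∑' ζ : V,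
            A η * (f (p + 1) ζ * g (p + 1) ((∑ i : Fin p, η i) + ζ)) := by
          rw [ENNReal.tsum_prod', ENNReal.tsum_comm]
      _ = ∑' η : Fin p → V, A η * ∑' ζ : V,
            f (p + 1) ζ * g (p + 1) ((∑ i : Fin p, η i) + ζ) := by
          simp_rw [ENNReal.tsum_mul_left]
      _ ≤ ∑' η : Fin p → V, A η *
            (ennLpNorm (f (p + 1)) (lam (p + 1)) * ennLpNorm (g (p + 1)) (Lam (p + 1))) := by
          refine ENNReal.tsum_le_tsum fun η => mul_le_mul_right ?_ _
          refine (tsum_mul_le_ennLpNorm (f (p + 1))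
            (fun ζ => g (p + 1) ((∑ i : Fin p, η i) + ζ))
            (hlam (p + 1) (by omega) le_rfl) (hk (p + 1) (by omega) le_rfl)).trans_eq ?_
          rw [ennLpNorm_shift_left (g (p + 1)) _ (Lam (p + 1))]
      _ = (∑' η : Fin p → V, A η) *
            (ennLpNorm (f (p + 1)) (lam (p + 1)) * ennLpNorm (g (p + 1)) (Lam (p + 1))) :=
          ENNReal.tsum_mul_right
      _ ≤ ((∏ i ∈ Finset.Icc 1 p, ennLpNorm (f i) (lam i)) *
            ∏ j ∈ Finset.Icc 2 p, ennLpNorm (g j) (Lam j)) *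
            (ennLpNorm (f (p + 1)) (lam (p + 1)) * ennLpNorm (g (p + 1)) (Lam (p + 1))) :=
          mul_le_mul_left IH' _
      _ = (∏ i ∈ Finset.Icc 1 (p + 1), ennLpNorm (f i) (lam i)) *
            ∏ j ∈ Finset.Icc 2 (p + 1), ennLpNorm (g j) (Lam j) := by
          rw [Finset.prod_Icc_succ_top (by omega : 1 ≤ p + 1),
            Finset.prod_Icc_succ_top (by omega : 2 ≤ p + 1)]
          ring

/-- generalized Young convolution inequality: for `p ≥ 2`, nonnegative
functions `f₁,…,f_p, g₂,…,g_p : ℤ^d → [0,∞]` and exponents `λ₁,…,λ_p, Λ₂,…,Λ_p ∈ [1,∞]`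
with `1/λ₁ + 1/λ₂ + 1/Λ₂ = 2` and `1/λ_k + 1/Λ_k = 1` for `3 ≤ k ≤ p`,
`∑_{ξ₁,…,ξ_p} ∏ᵢ f_i(ξ_i) ∏ⱼ g_j(ξ₁+⋯+ξ_j) ≤ ∏ᵢ ‖f_i‖_{ℓ^{λ_i}} ∏ⱼ ‖g_j‖_{ℓ^{Λ_j}}`. -/
theorem generalized_young
    (d p : ℕ) (hp : 2 ≤ p)
    (f g : ℕ → (Fin d → ℤ) → ℝ≥0∞)
    (lam Lam : ℕ → ℝ≥0∞)
    (hlam : ∀ i, 1 ≤ i → i ≤ p → 1 ≤ lam i)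
    (hLam : ∀ j, 2 ≤ j → j ≤ p → 1 ≤ Lam j)
    (h2 : 1 / lam 1 + 1 / lam 2 + 1 / Lam 2 = 2)
    (hk : ∀ k, 3 ≤ k → k ≤ p → 1 / lam k + 1 / Lam k = 1) :
    (∑' ξ : Fin p → (Fin d → ℤ),
        (∏ i : Fin p, f ((i : ℕ) + 1) (ξ i)) *
          ∏ j ∈ Finset.Icc 2 p,
            g j (∑ i ∈ Finset.univ.filter (fun i : Fin p => (i : ℕ) + 1 ≤ j), ξ i))
      ≤ (∏ i ∈ Finset.Icc 1 p, ennLpNorm (f i) (lam i)) *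
          ∏ j ∈ Finset.Icc 2 p, ennLpNorm (g j) (Lam j) := by
  exact gen_young_aux p hp f g lam Lam hlam hLam h2 hk
end

section
/- Let δ > 1 and α ∈ (0,1), and set ψ(u) = u[(1 − log u)^{1/δ} − (− log u)^{1/δ}]^{δ−α} for u ∈ (0,1]. Then for every v ∈ (0,1], ∫_v^1 du/ψ(u) ≤ C₂ [(1 − log v)^{(α − δα + δ²)/δ} − 1], where C₂ = δ^{1+δ−α}/((1−δ)α + δ²) > 0. -/
open Set

private lemma bernoulli_rpow {x c : ℝ} (hx : 0 ≤ x) (hc0 : 0 ≤ c) (hc1 : c ≤ 1) :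
    x ^ c ≤ c * x + (1 - c) := by
  have h := Real.geom_mean_le_arith_mean2_weighted (w₁ := c) (w₂ := 1 - c) (p₁ := x)
    (p₂ := 1) hc0 (by linarith) hx zero_le_one (by ring)
  simpa using h

private lemma keyA {t δ : ℝ} (ht : 0 ≤ t) (hδ : 1 < δ) :
    (1/δ) * (1+t) ^ (1/δ - 1) ≤ (1+t) ^ (1/δ) - t ^ (1/δ) := by
  have hs : (0:ℝ) < 1 + t := by linarith
  have hc0 : (0:ℝ) < 1/δ := by positivity
  have hc1 : 1/δ ≤ 1 := by
    rw [div_le_one (by linarith)]; linarith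
  set c := 1/δ with hc
  have hx0 : 0 ≤ t / (1+t) := by positivity
  have hb := bernoulli_rpow hx0 hc0.le hc1
  have hts : (1+t) * (t/(1+t)) = t := by field_simp
  have h1 : t ^ c = (1+t) ^ c * (t/(1+t)) ^ c := by
    rw [← Real.mul_rpow hs.le hx0, hts]
  have h2 : t ^ c ≤ (1+t) ^ c * (c * (t/(1+t)) + (1 - c)) := by
    rw [h1]
    exact mul_le_mul_of_nonneg_left hb (Real.rpow_nonneg hs.le c)
  have h3 : c * (t/(1+t)) + (1 - c) = 1 - c * (1/(1+t)) := by
    field_simp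
    ring
  have h4 : (1+t) ^ c * (1/(1+t)) = (1+t) ^ (c - 1) := by
    rw [Real.rpow_sub_one hs.ne' c]
    ring
  have h5 : t ^ c ≤ (1+t) ^ c - c * (1+t) ^ (c-1) := by
    calc t ^ c ≤ (1+t) ^ c * (1 - c * (1/(1+t))) := by rw [← h3]; exact h2
      _ = (1+t) ^ c - c * ((1+t) ^ c * (1/(1+t))) := by ring
      _ = (1+t) ^ c - c * (1+t) ^ (c-1) := by rw [h4]
  linarith

private lemma pointwise_bound (δ α : ℝ) (hδ : 1 < δ) (hα0 : 0 < α) (hα1 : α < 1)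
    {u : ℝ} (hu : 0 < u) (hu1 : u ≤ 1) :
    1 / (u * ((1 - Real.log u) ^ (1/δ) - (-Real.log u) ^ (1/δ)) ^ (δ - α))
      ≤ δ ^ (δ - α) * ((1 - Real.log u) ^ ((δ-1)*(δ-α)/δ) / u) := by
  have hδ0 : (0:ℝ) < δ := by linarith
  have he : (0:ℝ) < δ - α := by linarith
  set t := -Real.log u with htdef
  have ht : 0 ≤ t := by
    simp only [htdef, neg_nonneg]
    exact Real.log_nonpos hu.le hu1
  have hlog : 1 - Real.log u = 1 + t := by rw [htdef]; ring
  have hs : (0:ℝ) < 1 + t := by linarith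
  rw [hlog]
  have hA := keyA ht hδ
  have hApos : 0 < (1+t) ^ (1/δ) - t ^ (1/δ) := by
    have : (0:ℝ) < (1/δ) * (1+t) ^ (1/δ - 1) := by positivity
    linarith
  -- raise keyA to power δ-α
  have h2 : ((1/δ) * (1+t) ^ (1/δ - 1)) ^ (δ-α)
      ≤ ((1+t) ^ (1/δ) - t ^ (1/δ)) ^ (δ-α) :=
    Real.rpow_le_rpow (by positivity) hA he.le
  have h3 : ((1/δ) * (1+t) ^ (1/δ - 1)) ^ (δ-α)
      = (1/δ) ^ (δ-α) * (1+t) ^ ((1/δ - 1) * (δ-α)) := by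
    rw [Real.mul_rpow (by positivity) (Real.rpow_nonneg hs.le _), ← Real.rpow_mul hs.le]
  have hexp : (1/δ - 1) * (δ-α) = -((δ-1)*(δ-α)/δ) := by
    field_simp
    ring
  have h4 : (1/δ) ^ (δ-α) = (δ ^ (δ-α))⁻¹ := by
    rw [one_div, Real.inv_rpow hδ0.le]
  have h5 : (1+t) ^ ((1/δ - 1) * (δ-α)) = ((1+t) ^ ((δ-1)*(δ-α)/δ))⁻¹ := by
    rw [hexp, Real.rpow_neg hs.le]
  -- lower bound for denominator
  have hdenlb : u * ((δ ^ (δ-α))⁻¹ * ((1+t) ^ ((δ-1)*(δ-α)/δ))⁻¹)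
      ≤ u * ((1+t) ^ (1/δ) - t ^ (1/δ)) ^ (δ-α) := by
    apply mul_le_mul_of_nonneg_left _ hu.le
    calc (δ ^ (δ-α))⁻¹ * ((1+t) ^ ((δ-1)*(δ-α)/δ))⁻¹
        = (1/δ) ^ (δ-α) * (1+t) ^ ((1/δ - 1) * (δ-α)) := by rw [h4, h5]
      _ = ((1/δ) * (1+t) ^ (1/δ - 1)) ^ (δ-α) := h3.symm
      _ ≤ _ := h2
  have hdenpos : 0 < u * ((δ ^ (δ-α))⁻¹ * ((1+t) ^ ((δ-1)*(δ-α)/δ))⁻¹) := by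
    have := Real.rpow_pos_of_pos hδ0 (δ-α)
    have := Real.rpow_pos_of_pos hs ((δ-1)*(δ-α)/δ)
    positivity
  have h6 := one_div_le_one_div_of_le hdenpos hdenlb
  refine h6.trans_eq ?_
  have hδe : (0:ℝ) < δ ^ (δ-α) := Real.rpow_pos_of_pos hδ0 _
  have hte : (0:ℝ) < (1+t) ^ ((δ-1)*(δ-α)/δ) := Real.rpow_pos_of_pos hs _
  field_simp

private lemma continuousOn_lhs (δ α : ℝ) (hδ : 1 < δ) (hα0 : 0 < α) (hα1 : α < 1)
    {v : ℝ} (hv0 : 0 < v) (hv1 : v ≤ 1) :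
    ContinuousOn (fun u => 1 / (u * ((1 - Real.log u) ^ (1/δ) - (-Real.log u) ^ (1/δ)) ^ (δ - α)))
      (Icc v 1) := by
  have hδ0 : (0:ℝ) < δ := by linarith
  have hmem : ∀ x ∈ Icc v 1, x ≠ 0 := fun x hx => by
    have := hx.1; intro h; rw [h] at this; linarith
  have hlog : ContinuousOn Real.log (Icc v 1) :=
    Real.continuousOn_log.mono (fun x hx => by simp [hmem x hx])
  have h1 : ContinuousOn (fun u => (1 - Real.log u) ^ (1/δ)) (Icc v 1) :=
    (continuousOn_const.sub hlog).rpow_const (fun x _ => Or.inr (by positivity))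
  have h2 : ContinuousOn (fun u => (-Real.log u) ^ (1/δ)) (Icc v 1) :=
    hlog.neg.rpow_const (fun x _ => Or.inr (by positivity))
  have hB : ContinuousOn
      (fun u => ((1 - Real.log u) ^ (1/δ) - (-Real.log u) ^ (1/δ)) ^ (δ-α)) (Icc v 1) :=
    (h1.sub h2).rpow_const (fun x _ => Or.inr (by linarith))
  apply continuousOn_const.div (continuousOn_id.mul hB)
  intro x hx
  have hx0 : 0 < x := lt_of_lt_of_le hv0 hx.1
  have ht : 0 ≤ -Real.log x := by
    simp only [neg_nonneg]; exact Real.log_nonpos hx0.le hx.2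
  have hBpos : 0 < (1 - Real.log x) ^ (1/δ) - (-Real.log x) ^ (1/δ) := by
    have := Real.rpow_lt_rpow ht (by linarith : -Real.log x < 1 - Real.log x) (by positivity : (0:ℝ) < 1/δ)
    linarith
  have := Real.rpow_pos_of_pos hBpos (δ-α)
  exact mul_ne_zero hx0.ne' this.ne'

private lemma continuousOn_rhs (δ α : ℝ) (hδ : 1 < δ) {v : ℝ} (hv0 : 0 < v) (hv1 : v ≤ 1) :
    ContinuousOn (fun u => δ ^ (δ-α) * ((1 - Real.log u) ^ ((δ-1)*(δ-α)/δ) / u)) (Icc v 1) := by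
  have hmem : ∀ x ∈ Icc v 1, x ≠ 0 := fun x hx => by
    have := hx.1; intro h; rw [h] at this; linarith
  have hlog : ContinuousOn Real.log (Icc v 1) :=
    Real.continuousOn_log.mono (fun x hx => by simp [hmem x hx])
  have h1 : ContinuousOn (fun u => (1 - Real.log u) ^ ((δ-1)*(δ-α)/δ)) (Icc v 1) := by
    apply (continuousOn_const.sub hlog).rpow_const
    intro x hx
    left
    have hx0 : 0 < x := lt_of_lt_of_le hv0 hx.1
    have := Real.log_nonpos hx0.le hx.2
    intro h; simp only [Pi.sub_apply, sub_eq_zero] at h; linarith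
  exact continuousOn_const.mul (h1.div continuousOn_id hmem)

private lemma integral_rhs (δ α : ℝ) (hδ : 1 < δ) (hα0 : 0 < α) (hα1 : α < 1)
    {v : ℝ} (hv0 : 0 < v) (hv1 : v ≤ 1) :
    ∫ u in v..1, δ ^ (δ-α) * ((1 - Real.log u) ^ ((δ-1)*(δ-α)/δ) / u)
      = (δ ^ (1 + δ - α) / ((1 - δ) * α + δ ^ 2)) *
          ((1 - Real.log v) ^ ((α - δ * α + δ ^ 2) / δ) - 1) := by
  have hδ0 : (0:ℝ) < δ := by linarith
  set q : ℝ := (α - δ * α + δ ^ 2) / δ with hq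
  set C : ℝ := δ ^ (1 + δ - α) / ((1 - δ) * α + δ ^ 2) with hC
  have hden : (0:ℝ) < (1 - δ) * α + δ ^ 2 := by nlinarith
  have hqδ : δ * q = (1 - δ) * α + δ ^ 2 := by
    rw [hq]; field_simp
  have hq0 : 0 < q := by
    have h : 0 < δ * q := hqδ ▸ hden
    nlinarith
  have hCq : C * q = δ ^ (δ - α) := by
    have h1 : (1:ℝ) + δ - α = 1 + (δ - α) := by ring
    rw [hC, h1, Real.rpow_add hδ0, Real.rpow_one]
    field_simp
    rw [hqδ, div_eq_one_iff_eq (ne_of_gt (by nlinarith))]; ring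
  have hqp : q - 1 = (δ-1)*(δ-α)/δ := by
    rw [hq]; field_simp; ring
  set F : ℝ → ℝ := fun u => -(C * ((1 - Real.log u) ^ q - 1)) with hF
  have hderiv : ∀ x ∈ Set.uIcc v 1,
      HasDerivAt F (δ ^ (δ-α) * ((1 - Real.log x) ^ ((δ-1)*(δ-α)/δ) / x)) x := by
    intro x hx
    rw [Set.uIcc_of_le hv1] at hx
    have hx0 : 0 < x := lt_of_lt_of_le hv0 hx.1
    have hlx : 0 < 1 - Real.log x := by
      have := Real.log_nonpos hx0.le hx.2; linarith
    have h1 : HasDerivAt (fun u => 1 - Real.log u) (-x⁻¹) x :=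
      (Real.hasDerivAt_log hx0.ne').const_sub 1
    have h2 : HasDerivAt (fun u => (1 - Real.log u) ^ q)
        (-x⁻¹ * q * (1 - Real.log x) ^ (q - 1)) x :=
      h1.rpow_const (Or.inl hlx.ne')
    have h3 : HasDerivAt F (-(C * (-x⁻¹ * q * (1 - Real.log x) ^ (q - 1)))) x :=
      (((h2.sub_const 1)).const_mul C).neg
    convert h3 using 1
    rw [← hqp, ← hCq]
    field_simp
  have hint : IntervalIntegrable
      (fun u => δ ^ (δ-α) * ((1 - Real.log u) ^ ((δ-1)*(δ-α)/δ) / u))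
      MeasureTheory.volume v 1 :=
    (continuousOn_rhs δ α hδ hv0 hv1).intervalIntegrable_of_Icc hv1
  rw [intervalIntegral.integral_eq_sub_of_hasDerivAt hderiv hint]
  simp only [hF, Real.log_one, sub_zero, Real.one_rpow, sub_self, mul_zero, neg_zero]
  ring

/-- for `δ > 1`, `α ∈ (0,1)`,
`ψ(u) = u[(1-log u)^{1/δ} - (-log u)^{1/δ}]^{δ-α}`, and every `v ∈ (0,1]`,
`∫_v^1 du/ψ(u) ≤ C₂ [(1-log v)^{(α-δα+δ²)/δ} - 1]` with
`C₂ = δ^{1+δ-α}/((1-δ)α+δ²)`. -/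
theorem psi_integral_upper_bound
    (δ α : ℝ) (hδ : 1 < δ) (hα : α ∈ Set.Ioo (0:ℝ) 1)
    (v : ℝ) (hv : v ∈ Set.Ioc (0:ℝ) 1) :
    ∫ u in v..1,
        1 / (u * ((1 - Real.log u) ^ (1/δ) - (-Real.log u) ^ (1/δ)) ^ (δ - α))
      ≤ (δ ^ (1 + δ - α) / ((1 - δ) * α + δ ^ 2)) *
          ((1 - Real.log v) ^ ((α - δ * α + δ ^ 2) / δ) - 1) := by
  obtain ⟨hα0, hα1⟩ := hα
  obtain ⟨hv0, hv1⟩ := hv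
  rw [← integral_rhs δ α hδ hα0 hα1 hv0 hv1]
  apply intervalIntegral.integral_mono_on hv1
  · exact (continuousOn_lhs δ α hδ hα0 hα1 hv0 hv1).intervalIntegrable_of_Icc hv1
  · exact (continuousOn_rhs δ α hδ hv0 hv1).intervalIntegrable_of_Icc hv1
  · intro x hx
    exact pointwise_bound δ α hδ hα0 hα1 (lt_of_lt_of_le hv0 hx.1) hx.2
end

section
/- Let δ > 1 and α ∈ (0,1), and set ψ(u) = u[(1 − log u)^{1/δ} − (− log u)^{1/δ}]^{δ−α} for u ∈ (0,1]. Then for every v ∈ (0,1), ∫_v^1 du/ψ(u) ≥ (δ^{δ−α} / (1 − (1/δ − 1)(δ − α))) · (− log v)^{1 − (1/δ − 1)(δ − α)}; in particular ∫_v^1 du/ψ(u) → ∞ as v → 0⁺. -/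
open Set Filter

/-- MVT inequality: for `0<p≤1` and `t>0`, `(1+t)^p - t^p ≤ p * t^(p-1)`. -/
lemma psi_mvt_aux (p t : ℝ) (hp0 : 0 < p) (hp1 : p ≤ 1) (ht : 0 < t) :
    (1 + t) ^ p - t ^ p ≤ p * t ^ (p - 1) := by
  obtain ⟨c, hc, hceq⟩ := exists_hasDerivAt_eq_slope (fun x => x ^ p)
      (fun x => p * x ^ (p - 1)) (show t < t + 1 by linarith)
      (by
        apply ContinuousOn.rpow_const continuousOn_id
        intro x hx
        exact Or.inl (by simp at hx ⊢; nlinarith [hx.1]))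
      (fun x hx => Real.hasDerivAt_rpow_const (Or.inl (by simp at hx; nlinarith [hx.1])))
  have hcb : p * c ^ (p - 1) ≤ p * t ^ (p - 1) := by
    have := Real.rpow_le_rpow_of_nonpos ht (le_of_lt hc.1) (by linarith : p - 1 ≤ 0)
    nlinarith
  have : ((t + 1) ^ p - t ^ p) / (t + 1 - t) = p * c ^ (p - 1) := hceq.symm
  simp only [add_sub_cancel_left] at this
  rw [div_one] at this
  rw [show (1:ℝ) + t = t + 1 by ring]
  linarith

/-- Pointwise comparison. -/
lemma psi_pointwise (δ α u : ℝ) (hδ : 1 < δ) (hα0 : 0 < α) (hα1 : α < 1)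
    (hu0 : 0 < u) (hu1 : u ≤ 1) :
    δ ^ (δ - α) * (-Real.log u) ^ ((1 - 1/δ) * (δ - α)) / u
      ≤ 1 / (u * ((1 - Real.log u) ^ (1/δ) - (-Real.log u) ^ (1/δ)) ^ (δ - α)) := by
  have hδ0 : (0:ℝ) < δ := by linarith
  set p := 1/δ with hp
  set q := δ - α with hq
  have hq0 : 0 < q := by rw [hq]; linarith
  have hp0 : 0 < p := by rw [hp]; positivity
  have hp1 : p < 1 := by rw [hp, div_lt_one hδ0]; linarith
  set t := -Real.log u with ht
  have ht0 : 0 ≤ t := by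
    rw [ht, neg_nonneg]
    exact Real.log_nonpos (le_of_lt hu0) hu1
  have hbase : 1 - Real.log u = 1 + t := by rw [ht]; ring
  rw [hbase]
  have hβ0 : 0 < (1 - p) * q := by nlinarith
  rcases eq_or_lt_of_le ht0 with ht0' | ht0'
  · -- t = 0
    rw [← ht0', Real.zero_rpow (ne_of_gt hβ0)]
    have : (1:ℝ) + 0 = 1 := by ring
    rw [this, Real.one_rpow, Real.zero_rpow (ne_of_gt hp0)]
    simp only [mul_zero, zero_div, sub_zero, Real.one_rpow, mul_one]
    positivity
  · -- t > 0
    set D := (1 + t) ^ p - t ^ p with hD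
    have hDpos : 0 < D := by
      rw [hD]
      have : t ^ p < (1 + t) ^ p :=
        Real.rpow_lt_rpow ht0 (by linarith) hp0
      linarith
    have hDq : 0 < D ^ q := Real.rpow_pos_of_pos hDpos q
    rw [div_le_div_iff₀ hu0 (by positivity)]
    have key : δ ^ q * t ^ ((1 - p) * q) * D ^ q ≤ 1 := by
      have hDle : D ≤ p * t ^ (p - 1) := psi_mvt_aux p t hp0 (le_of_lt hp1) ht0'
      have h1 : D ^ q ≤ (p * t ^ (p - 1)) ^ q :=
        Real.rpow_le_rpow (le_of_lt hDpos) hDle (le_of_lt hq0)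
      have h2 : (p * t ^ (p - 1)) ^ q = p ^ q * t ^ ((p - 1) * q) := by
        rw [Real.mul_rpow (le_of_lt hp0) (Real.rpow_nonneg ht0 _), ← Real.rpow_mul ht0]
      calc δ ^ q * t ^ ((1 - p) * q) * D ^ q
          ≤ δ ^ q * t ^ ((1 - p) * q) * (p ^ q * t ^ ((p - 1) * q)) := by
            rw [← h2]; gcongr
        _ = (δ ^ q * p ^ q) * (t ^ ((1 - p) * q) * t ^ ((p - 1) * q)) := by ring
        _ = 1 := by
            rw [← Real.mul_rpow (le_of_lt hδ0) (le_of_lt hp0),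
                ← Real.rpow_add ht0']
            have hδp : δ * p = 1 := by rw [hp]; field_simp
            have hexp : (1 - p) * q + (p - 1) * q = 0 := by ring
            rw [hδp, hexp, Real.one_rpow, Real.rpow_zero, mul_one]
    calc δ ^ q * t ^ ((1 - p) * q) * (u * D ^ q)
        = (δ ^ q * t ^ ((1 - p) * q) * D ^ q) * u := by ring
      _ ≤ 1 * u := by
          apply mul_le_mul_of_nonneg_right key (le_of_lt hu0)

/-- for `δ > 1`, `α ∈ (0,1)`,
`ψ(u) = u[(1-log u)^{1/δ} - (-log u)^{1/δ}]^{δ-α}`, and every `v ∈ (0,1)`,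
`∫_v^1 du/ψ(u) ≥ (δ^{δ-α}/(1-(1/δ-1)(δ-α))) (-log v)^{1-(1/δ-1)(δ-α)}`;
in particular `∫_v^1 du/ψ(u) → ∞` as `v → 0⁺`. -/
theorem psi_integral_lower_bound
    (δ α : ℝ) (hδ : 1 < δ) (hα : α ∈ Set.Ioo (0:ℝ) 1) :
    (∀ v : ℝ, v ∈ Set.Ioo (0:ℝ) 1 →
      (δ ^ (δ - α) / (1 - (1/δ - 1) * (δ - α))) *
          (-Real.log v) ^ (1 - (1/δ - 1) * (δ - α))
        ≤ ∫ u in v..1,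
            1 / (u * ((1 - Real.log u) ^ (1/δ) - (-Real.log u) ^ (1/δ)) ^ (δ - α))) ∧
    Filter.Tendsto
      (fun v : ℝ => ∫ u in v..1,
        1 / (u * ((1 - Real.log u) ^ (1/δ) - (-Real.log u) ^ (1/δ)) ^ (δ - α)))
      (nhdsWithin 0 (Set.Ioi 0)) Filter.atTop := by
  obtain ⟨hα0, hα1⟩ := hα
  have hδ0 : (0:ℝ) < δ := by linarith
  set q := δ - α with hq
  have hq0 : 0 < q := by rw [hq]; linarith
  set p := 1/δ with hp
  have hp0 : 0 < p := by rw [hp]; positivity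
  have hp1 : p < 1 := by rw [hp, div_lt_one hδ0]; linarith
  set β := (1 - p) * q with hβ
  have hβ0 : 0 < β := by rw [hβ]; nlinarith
  have hexp : 1 - (1/δ - 1) * (δ - α) = β + 1 := by rw [hβ, hp, hq]; ring
  -- the comparison function and its antiderivative
  set g : ℝ → ℝ := fun u => δ ^ q * (-Real.log u) ^ β / u with hg
  set f : ℝ → ℝ := fun u =>
    1 / (u * ((1 - Real.log u) ^ p - (-Real.log u) ^ p) ^ q) with hf
  set H : ℝ → ℝ := fun u => -(δ ^ q / (β + 1)) * (-Real.log u) ^ (β + 1) with hH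
  have key : ∀ v : ℝ, v ∈ Set.Ioo (0:ℝ) 1 →
      (δ ^ q / (β + 1)) * (-Real.log v) ^ (β + 1) ≤ ∫ u in v..1, f u := by
    intro v hv
    obtain ⟨hv0, hv1⟩ := hv
    have huIcc : Set.uIcc v 1 = Set.Icc v 1 := Set.uIcc_of_le (le_of_lt hv1)
    have hupos : ∀ u ∈ Set.Icc v 1, 0 < u := fun u hu => lt_of_lt_of_le hv0 hu.1
    -- continuity of f on [v,1]
    have hcontf : ContinuousOn f (Set.Icc v 1) := by
      intro u hu
      have hu0 := hupos u hu
      apply ContinuousAt.continuousWithinAt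
      have hlog : ContinuousAt Real.log u := Real.continuousAt_log (ne_of_gt hu0)
      have h1 : ContinuousAt (fun u => (1 - Real.log u) ^ p) u :=
        (Real.continuousAt_rpow_const _ p (Or.inr (le_of_lt hp0))).comp
          (continuousAt_const.sub hlog)
      have h2 : ContinuousAt (fun u => (-Real.log u) ^ p) u :=
        (Real.continuousAt_rpow_const _ p (Or.inr (le_of_lt hp0))).comp hlog.neg
      have h3 : ContinuousAt
          (fun u => ((1 - Real.log u) ^ p - (-Real.log u) ^ p) ^ q) u :=
        (Real.continuousAt_rpow_const _ q (Or.inr (le_of_lt hq0))).comp (h1.sub h2)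
      have ht0 : 0 ≤ -Real.log u := by
        rw [neg_nonneg]; exact Real.log_nonpos (le_of_lt hu0) hu.2
      have hDpos : 0 < (1 - Real.log u) ^ p - (-Real.log u) ^ p := by
        have : (-Real.log u) ^ p < (1 - Real.log u) ^ p :=
          Real.rpow_lt_rpow ht0 (by linarith) hp0
        linarith
      exact continuousAt_const.div (continuousAt_id.mul h3)
        (by positivity)
    -- continuity of g on [v,1]
    have hcontg : ContinuousOn g (Set.Icc v 1) := by
      intro u hu
      have hu0 := hupos u hu
      apply ContinuousAt.continuousWithinAt
      have hlog : ContinuousAt Real.log u := Real.continuousAt_log (ne_of_gt hu0)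
      have h2 : ContinuousAt (fun u => (-Real.log u) ^ β) u :=
        (Real.continuousAt_rpow_const _ β (Or.inr (le_of_lt hβ0))).comp hlog.neg
      exact (continuousAt_const.mul h2).div continuousAt_id (ne_of_gt hu0)
    have hintf : IntervalIntegrable f MeasureTheory.volume v 1 :=
      (huIcc ▸ hcontf).intervalIntegrable
    have hintg : IntervalIntegrable g MeasureTheory.volume v 1 :=
      (huIcc ▸ hcontg).intervalIntegrable
    -- FTC for g
    have hderiv : ∀ u ∈ Set.uIcc v 1, HasDerivAt H (g u) u := by
      intro u hu
      rw [huIcc] at hu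
      have hu0 := hupos u hu
      have h1 : HasDerivAt Real.log u⁻¹ u := Real.hasDerivAt_log (ne_of_gt hu0)
      have h2 : HasDerivAt (fun u => -Real.log u) (-u⁻¹) u := h1.neg
      have h3 : HasDerivAt (fun u => (-Real.log u) ^ (β + 1))
          (-u⁻¹ * (β + 1) * (-Real.log u) ^ (β + 1 - 1)) u :=
        h2.rpow_const (p := β + 1) (Or.inr (by linarith))
      have h4 := h3.const_mul (-(δ ^ q / (β + 1)))
      convert h4 using 1
      case e'_4 => rfl
      case e'_5 => rfl
      rw [show β + 1 - 1 = β by ring]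
      rw [hg]
      field_simp
    have hftc : ∫ u in v..1, g u = H 1 - H v :=
      intervalIntegral.integral_eq_sub_of_hasDerivAt hderiv hintg
    have hH1 : H 1 = 0 := by
      rw [hH]
      simp [Real.log_one, Real.zero_rpow (by positivity : β + 1 ≠ 0)]
    have hHv : H v = -(δ ^ q / (β + 1)) * (-Real.log v) ^ (β + 1) := rfl
    have hgval : ∫ u in v..1, g u = (δ ^ q / (β + 1)) * (-Real.log v) ^ (β + 1) := by
      rw [hftc, hH1, hHv]; ring
    rw [← hgval]
    apply intervalIntegral.integral_mono_on (le_of_lt hv1) hintg hintf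
    intro u hu
    exact psi_pointwise δ α u hδ hα0 hα1 (hupos u hu) hu.2
  constructor
  · intro v hv
    rw [hexp, show δ ^ (δ - α) / (β + 1) = δ ^ q / (β + 1) by rw [hq]]
    exact key v hv
  · have hlow : Filter.Tendsto (fun v : ℝ =>
        (δ ^ q / (β + 1)) * (-Real.log v) ^ (β + 1))
        (nhdsWithin 0 (Set.Ioi 0)) Filter.atTop := by
      have h1 : Filter.Tendsto (fun v : ℝ => -Real.log v)
          (nhdsWithin 0 (Set.Ioi 0)) Filter.atTop :=
        tendsto_neg_atBot_atTop.comp Real.tendsto_log_nhdsGT_zero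
      have h2 : Filter.Tendsto (fun v : ℝ => (-Real.log v) ^ (β + 1))
          (nhdsWithin 0 (Set.Ioi 0)) Filter.atTop :=
        (tendsto_rpow_atTop (by linarith)).comp h1
      exact h2.const_mul_atTop (by positivity)
    apply Filter.tendsto_atTop_mono' _ _ hlow
    have hmem : Set.Ioo (0:ℝ) 1 ∈ nhdsWithin (0:ℝ) (Set.Ioi 0) := by
      rw [show Set.Ioo (0:ℝ) 1 = Set.Ioi 0 ∩ Set.Iio 1 by rw [Set.Ioi_inter_Iio]]
      exact Filter.inter_mem self_mem_nhdsWithin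
        (mem_nhdsWithin_of_mem_nhds (Iio_mem_nhds one_pos))
    filter_upwards [hmem] with v hv
    exact key v hv
end

section
/- Let δ ∈ (0,1] and α ∈ (0,1). Then for every v ∈ (0,1], ∫₀^{−log v} [(1+s)^{1/δ} − s^{1/δ}]^α ds ≤ (δ^{1−α} / ((1−δ)α + δ)) · [(1 − log v)^{((1−δ)α + δ)/δ} − 1]. -/
open Set

private lemma key_rpow_bound {p s : ℝ} (hp : 1 ≤ p) (hs : 0 ≤ s) :
    (1 + s) ^ p - s ^ p ≤ p * (1 + s) ^ (p - 1) := by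
  have hd : ∀ x ∈ Icc s (s + 1), HasDerivWithinAt (fun x : ℝ => x ^ p)
      (p * x ^ (p - 1)) (Icc s (s + 1)) x := fun x _ =>
    (Real.hasDerivAt_rpow_const (Or.inr hp)).hasDerivWithinAt
  have hbound : ∀ x ∈ Ico s (s + 1), ‖p * x ^ (p - 1)‖ ≤ p * (1 + s) ^ (p - 1) := by
    intro x hx
    have hx0 : 0 ≤ x := le_trans hs hx.1
    have h1 : x ^ (p - 1) ≤ (1 + s) ^ (p - 1) :=
      Real.rpow_le_rpow hx0 (by linarith [hx.2]) (by linarith)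
    have h2 : 0 ≤ p * x ^ (p - 1) := by positivity
    rw [Real.norm_eq_abs, abs_of_nonneg h2]
    exact mul_le_mul_of_nonneg_left h1 (by linarith)
  have h := norm_image_sub_le_of_norm_deriv_le_segment' hd hbound (s + 1)
    ⟨by linarith, le_refl _⟩
  have h' : (s + 1) ^ p - s ^ p ≤ p * (1 + s) ^ (p - 1) * (s + 1 - s) :=
    le_trans (le_abs_self _) h
  have he : s + 1 - s = 1 := by ring
  rw [he, mul_one] at h'
  rwa [add_comm s 1] at h'

/-- for `δ ∈ (0,1]`, `α ∈ (0,1)` and `v ∈ (0,1]`,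
`∫₀^{-log v} [(1+s)^{1/δ} - s^{1/δ}]^α ds
  ≤ (δ^{1-α}/((1-δ)α+δ)) [(1-log v)^{((1-δ)α+δ)/δ} - 1]`. -/
theorem F_integral_upper_bound
    (δ α : ℝ) (hδ : δ ∈ Set.Ioc (0:ℝ) 1) (hα : α ∈ Set.Ioo (0:ℝ) 1)
    (v : ℝ) (hv : v ∈ Set.Ioc (0:ℝ) 1) :
    ∫ s in (0:ℝ)..(-Real.log v), ((1 + s) ^ (1/δ) - s ^ (1/δ)) ^ α
      ≤ (δ ^ (1 - α) / ((1 - δ) * α + δ)) *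
          ((1 - Real.log v) ^ (((1 - δ) * α + δ) / δ) - 1) := by
  obtain ⟨hδ0, hδ1⟩ := hδ
  obtain ⟨hα0, hα1⟩ := hα
  obtain ⟨hv0, hv1⟩ := hv
  set T := -Real.log v with hTdef
  have hT0 : 0 ≤ T := by
    have := Real.log_nonpos hv0.le hv1
    simp only [hTdef]; linarith
  have hp1 : 1 ≤ 1 / δ := by
    rw [le_div_iff₀ hδ0]; linarith
  set β := (1 - δ) * α / δ with hβdef
  have hβ0 : 0 ≤ β := by
    apply div_nonneg _ hδ0.le
    exact mul_nonneg (by linarith) hα0.le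
  have hden : 0 < (1 - δ) * α + δ := by nlinarith
  -- pointwise bound
  have hpt : ∀ s ∈ Icc (0:ℝ) T,
      ((1 + s) ^ (1/δ) - s ^ (1/δ)) ^ α ≤ δ ^ (-α) * (1 + s) ^ β := by
    intro s hs
    have hs0 : (0:ℝ) ≤ s := hs.1
    have h1s : (0:ℝ) ≤ 1 + s := by linarith
    have h1 : (1 + s) ^ (1/δ) - s ^ (1/δ) ≤ (1/δ) * (1 + s) ^ (1/δ - 1) :=
      key_rpow_bound hp1 hs0
    have h0 : 0 ≤ (1 + s) ^ (1/δ) - s ^ (1/δ) :=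
      sub_nonneg.2 (Real.rpow_le_rpow hs0 (by linarith) (by positivity))
    have e1 : (1/δ) ^ α = δ ^ (-α) := by
      rw [one_div, Real.inv_rpow hδ0.le, ← Real.rpow_neg hδ0.le]
    have e2 : ((1 + s) ^ (1/δ - 1)) ^ α = (1 + s) ^ β := by
      rw [← Real.rpow_mul h1s]
      congr 1
      have hd : 1/δ - 1 = (1 - δ)/δ := by field_simp
      rw [hd, div_mul_eq_mul_div]
    calc ((1 + s) ^ (1/δ) - s ^ (1/δ)) ^ α
        ≤ ((1/δ) * (1 + s) ^ (1/δ - 1)) ^ α := Real.rpow_le_rpow h0 h1 hα0.le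
      _ = (1/δ) ^ α * ((1 + s) ^ (1/δ - 1)) ^ α :=
          Real.mul_rpow (by positivity) (Real.rpow_nonneg h1s _)
      _ = δ ^ (-α) * (1 + s) ^ β := by rw [e1, e2]
  -- continuity / integrability
  have hc1 : Continuous fun s : ℝ => ((1 + s) ^ (1/δ) - s ^ (1/δ)) ^ α := by
    apply (Real.continuous_rpow_const hα0.le).comp
    exact ((Real.continuous_rpow_const (by positivity)).comp
      (continuous_const.add continuous_id)).sub
      (Real.continuous_rpow_const (by positivity))
  have hc2 : Continuous fun s : ℝ => δ ^ (-α) * (1 + s) ^ β :=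
    continuous_const.mul ((Real.continuous_rpow_const hβ0).comp
      (continuous_const.add continuous_id))
  have hi1 : IntervalIntegrable (fun s : ℝ => ((1 + s) ^ (1/δ) - s ^ (1/δ)) ^ α)
      MeasureTheory.volume 0 T := hc1.intervalIntegrable 0 T
  have hi2 : IntervalIntegrable (fun s : ℝ => δ ^ (-α) * (1 + s) ^ β)
      MeasureTheory.volume 0 T := hc2.intervalIntegrable 0 T
  have hmono := intervalIntegral.integral_mono_on hT0 hi1 hi2 hpt
  -- compute the majorant integral
  have hcalc : (∫ s in (0:ℝ)..T, δ ^ (-α) * (1 + s) ^ β)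
      = δ ^ (-α) * (((1 + T) ^ (β + 1) - 1) / (β + 1)) := by
    rw [intervalIntegral.integral_const_mul]
    congr 1
    rw [intervalIntegral.integral_comp_add_left (fun x : ℝ => x ^ β) 1,
      integral_rpow (Or.inl (by linarith))]
    norm_num
  have hfinal : δ ^ (-α) * (((1 + T) ^ (β + 1) - 1) / (β + 1))
      = (δ ^ (1 - α) / ((1 - δ) * α + δ)) *
          ((1 - Real.log v) ^ (((1 - δ) * α + δ) / δ) - 1) := by
    have hβ1 : β + 1 = ((1 - δ) * α + δ) / δ := by
      rw [hβdef]
      field_simp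
    have h1T : 1 + T = 1 - Real.log v := by
      simp only [hTdef]; ring
    rw [hβ1, h1T]
    have hda : δ ^ (1 - α) = δ * δ ^ (-α) := by
      rw [sub_eq_add_neg, Real.rpow_one_add' hδ0.le (by linarith)]
    rw [hda]
    field_simp
  calc (∫ s in (0:ℝ)..T, ((1 + s) ^ (1/δ) - s ^ (1/δ)) ^ α)
      ≤ ∫ s in (0:ℝ)..T, δ ^ (-α) * (1 + s) ^ β := hmono
    _ = _ := by rw [hcalc, hfinal]
end

section
/- Let δ > 1 and α ∈ (0,1), and define g(x) = x[(1 − log x)^{1/δ} − (− log x)^{1/δ}]^{δ−α} for x ∈ (0,1]. Then g is convex and strictly increasing on (0,1]. -/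
open Set

open Real in

private lemma cosh_key {b u : ℝ} (hb0 : 0 < b) (hb1 : b < 1) :
    Real.exp (b*u) + Real.exp (-(b*u)) ≤ b*(Real.exp u + Real.exp (-u)) + 2*(1-b) := by
  have h1 := convexOn_exp.2 (mem_univ u) (mem_univ (0:ℝ)) hb0.le (by linarith : (0:ℝ) ≤ 1 - b)
    (by ring)
  have h2 := convexOn_exp.2 (mem_univ (-u)) (mem_univ (0:ℝ)) hb0.le (by linarith : (0:ℝ) ≤ 1 - b)
    (by ring)
  simp only [smul_eq_mul, mul_zero, add_zero, Real.exp_zero, mul_one, mul_neg] at h1 h2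
  linarith

private lemma key2 {a : ℝ} (u : ℝ) (ha : 0 < a) (ha1 : a < 1) :
    a * (Real.exp ((1-a)*u) - 1)^2
      ≤ (1-a) * (1 - Real.exp (-(a*u))) * (Real.exp ((2-a)*u) - 1) := by
  set b := 1 - a with hb
  have hb0 : 0 < b := by simp [hb]; linarith
  have hb1 : b < 1 := by simp [hb]; linarith
  have key := cosh_key (u := u) hb0 hb1
  set X := Real.exp u with hX
  set Y := Real.exp (-u) with hY
  set Z := Real.exp (b*u) with hZ
  set W := Real.exp (-(b*u)) with hW
  have hXY : X * Y = 1 := by rw [hX, hY, ← Real.exp_add]; simp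
  have hZW : Z * W = 1 := by rw [hZ, hW, ← Real.exp_add]; simp
  have e1 : Real.exp (-(a*u)) = Y * Z := by
    rw [hY, hZ, ← Real.exp_add]; congr 1; rw [hb]; ring
  have e2 : Real.exp ((2-a)*u) = X * Z := by
    rw [hX, hZ, ← Real.exp_add]; congr 1; rw [hb]; ring
  have e3 : Real.exp ((1-a)*u) = Z := by rw [hZ]
  rw [e1, e2]
  have h3 : (Z + W) * Z ≤ (b*(X+Y) + 2*(1-b)) * Z :=
    mul_le_mul_of_nonneg_right key (Real.exp_pos _).le
  have hab : a = 1 - b := by rw [hb]; ring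
  have h4 : X*Y*Z^2 = Z^2 := by rw [hXY]; ring
  rw [hab]
  nlinarith [h3, hZW, h4]

private lemma key3 {a p q : ℝ} (ha : 0 < a) (ha1 : a < 1) (hq : 0 < q) (hpq : q < p) :
    a * (q^(a-1) - p^(a-1))^2 ≤ (1-a) * (p^a - q^a) * (q^(a-2) - p^(a-2)) := by
  have hp : 0 < p := hq.trans hpq
  set c := Real.log p with hc
  set d := Real.log q with hd
  have hu : 0 < c - d := sub_pos.2 (Real.log_lt_log hq hpq)
  rw [Real.rpow_def_of_pos hp, Real.rpow_def_of_pos hp, Real.rpow_def_of_pos hp,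
      Real.rpow_def_of_pos hq, Real.rpow_def_of_pos hq, Real.rpow_def_of_pos hq]
  have key := key2 (c - d) ha ha1
  set M := Real.exp ((a-1)*c) with hM
  have e1 : Real.exp (d*(a-1)) = Real.exp ((1-a)*(c-d)) * M := by
    rw [hM, ← Real.exp_add]; congr 1; ring
  have e2 : Real.exp (c*(a-1)) = M := by rw [hM]; congr 1; ring
  have e5 : Real.exp (c*a) = M * Real.exp c := by
    rw [hM, ← Real.exp_add]; congr 1; ring
  have e6 : Real.exp (c*(a-2)) = M * Real.exp (-c) := by
    rw [hM, ← Real.exp_add]; congr 1; ring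
  have e7 : Real.exp (d*a) = M * Real.exp c * Real.exp (-(a*(c-d))) := by
    rw [hM, ← Real.exp_add, ← Real.exp_add]; congr 1; ring
  have e8 : Real.exp (d*(a-2)) = M * Real.exp (-c) * Real.exp ((2-a)*(c-d)) := by
    rw [hM, ← Real.exp_add, ← Real.exp_add]; congr 1; ring
  have ecc : Real.exp c * Real.exp (-c) = 1 := by rw [← Real.exp_add]; simp
  rw [e1, e2, e5, e6, e7, e8]
  have h := mul_le_mul_of_nonneg_right key (mul_pos (Real.exp_pos ((a-1)*c)) (Real.exp_pos ((a-1)*c))).le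
  calc a * (Real.exp ((1-a)*(c-d)) * M - M)^2
      = a * (Real.exp ((1-a)*(c-d)) - 1)^2 * (M*M) := by ring
    _ ≤ (1-a) * (1 - Real.exp (-(a*(c-d)))) * (Real.exp ((2-a)*(c-d)) - 1) * (M*M) := h
    _ = (1-a) * (M * Real.exp c - M * Real.exp c * Real.exp (-(a*(c-d))))
          * (M * Real.exp (-c) * Real.exp ((2-a)*(c-d)) - M * Real.exp (-c)) := by
        rw [show (1-a) * (M * Real.exp c - M * Real.exp c * Real.exp (-(a*(c-d))))
          * (M * Real.exp (-c) * Real.exp ((2-a)*(c-d)) - M * Real.exp (-c))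
          = (1-a) * (1 - Real.exp (-(a*(c-d)))) * (Real.exp ((2-a)*(c-d)) - 1)
            * (M*M) * (Real.exp c * Real.exp (-c)) by ring, ecc, mul_one]

private lemma hasDerivAt_gfun {a β x : ℝ} (ha : 0 < a) (hx0 : 0 < x) (hx1 : x < 1) :
    HasDerivAt (fun x : ℝ => x * ((1 - Real.log x) ^ a - (-Real.log x) ^ a) ^ β)
      (((1 - Real.log x) ^ a - (-Real.log x) ^ a) ^ β
        + a * β * (((1 - Real.log x) ^ a - (-Real.log x) ^ a) ^ (β - 1)
          * ((-Real.log x) ^ (a-1) - (1 - Real.log x) ^ (a-1)))) x := by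
  have hlog : Real.log x < 0 := Real.log_neg hx0 hx1
  have hP : (0:ℝ) < 1 - Real.log x := by linarith
  have hQ : (0:ℝ) < -Real.log x := by linarith
  have hlogd : HasDerivAt Real.log x⁻¹ x := Real.hasDerivAt_log hx0.ne'
  have hPd : HasDerivAt (fun x : ℝ => 1 - Real.log x) (-x⁻¹) x := by
    exact ((hasDerivAt_const x (1:ℝ)).sub hlogd).congr_deriv (zero_sub _)
  have hQd : HasDerivAt (fun x : ℝ => -Real.log x) (-x⁻¹) x := hlogd.neg
  have hA := (hPd.rpow_const (p := a) (Or.inl hP.ne')).sub (hQd.rpow_const (p := a) (Or.inl hQ.ne'))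
  have hApos : 0 < (1 - Real.log x) ^ a - (-Real.log x) ^ a :=
    sub_pos.2 (Real.rpow_lt_rpow hQ.le (by linarith) ha)
  have hAb := hA.rpow_const (p := β) (Or.inl hApos.ne')
  have h := (hasDerivAt_id x).mul hAb
  refine h.congr_deriv ?_
  simp only [Pi.sub_apply, id_eq]
  field_simp
  ring

private lemma hasDerivAt_Efun {a β x : ℝ} (ha : 0 < a) (hx0 : 0 < x) (hx1 : x < 1) :
    HasDerivAt (fun x : ℝ => ((1 - Real.log x) ^ a - (-Real.log x) ^ a) ^ β
        + a * β * (((1 - Real.log x) ^ a - (-Real.log x) ^ a) ^ (β - 1)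
          * ((-Real.log x) ^ (a-1) - (1 - Real.log x) ^ (a-1))))
      (a * β * x⁻¹ * ((1 - Real.log x) ^ a - (-Real.log x) ^ a) ^ (β - 2) *
        ( ((1 - Real.log x) ^ a - (-Real.log x) ^ a)
            * ((-Real.log x) ^ (a-1) - (1 - Real.log x) ^ (a-1))
          + a * (β-1) * ((-Real.log x) ^ (a-1) - (1 - Real.log x) ^ (a-1)) ^ 2
          + (1-a) * ((1 - Real.log x) ^ a - (-Real.log x) ^ a)
            * ((-Real.log x) ^ (a-2) - (1 - Real.log x) ^ (a-2)) )) x := by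
  have hlog : Real.log x < 0 := Real.log_neg hx0 hx1
  have hP : (0:ℝ) < 1 - Real.log x := by linarith
  have hQ : (0:ℝ) < -Real.log x := by linarith
  have hlogd : HasDerivAt Real.log x⁻¹ x := Real.hasDerivAt_log hx0.ne'
  have hPd : HasDerivAt (fun x : ℝ => 1 - Real.log x) (-x⁻¹) x := by
    exact ((hasDerivAt_const x (1:ℝ)).sub hlogd).congr_deriv (zero_sub _)
  have hQd : HasDerivAt (fun x : ℝ => -Real.log x) (-x⁻¹) x := hlogd.neg
  have hA := (hPd.rpow_const (p := a) (Or.inl hP.ne')).sub (hQd.rpow_const (p := a) (Or.inl hQ.ne'))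
  have hApos : 0 < (1 - Real.log x) ^ a - (-Real.log x) ^ a :=
    sub_pos.2 (Real.rpow_lt_rpow hQ.le (by linarith) ha)
  have hAb := hA.rpow_const (p := β) (Or.inl hApos.ne')
  have hAb1 := hA.rpow_const (p := β - 1) (Or.inl hApos.ne')
  have hB := (hQd.rpow_const (p := a-1) (Or.inl hQ.ne')).sub (hPd.rpow_const (p := a-1) (Or.inl hP.ne'))
  have h := hAb.add ((hAb1.mul hB).const_mul (a * β))
  refine h.congr_deriv ?_
  simp only [Pi.sub_apply]
  have hr1 : ((1 - Real.log x) ^ a - (-Real.log x) ^ a) ^ (β - 1)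
      = ((1 - Real.log x) ^ a - (-Real.log x) ^ a) ^ (β - 2)
        * ((1 - Real.log x) ^ a - (-Real.log x) ^ a) := by
    rw [show β - 1 = (β - 2) + 1 by ring, Real.rpow_add hApos, Real.rpow_one]
  have hr2 : ((-Real.log x) : ℝ) ^ (a-1-1) = (-Real.log x) ^ (a-2) := by
    rw [show a - 1 - 1 = a - 2 from by ring]
  have hr3 : ((1 - Real.log x) : ℝ) ^ (a-1-1) = (1 - Real.log x) ^ (a-2) := by
    rw [show a - 1 - 1 = a - 2 from by ring]
  rw [hr1, hr2, hr3]
  field_simp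
  ring_nf

private lemma E_pos {a β x : ℝ} (ha : 0 < a) (ha1 : a < 1) (hβ : 0 < β)
    (hx0 : 0 < x) (hx1 : x < 1) :
    0 < ((1 - Real.log x) ^ a - (-Real.log x) ^ a) ^ β
        + a * β * (((1 - Real.log x) ^ a - (-Real.log x) ^ a) ^ (β - 1)
          * ((-Real.log x) ^ (a-1) - (1 - Real.log x) ^ (a-1))) := by
  have hlog : Real.log x < 0 := Real.log_neg hx0 hx1
  have hP : (0:ℝ) < 1 - Real.log x := by linarith
  have hQ : (0:ℝ) < -Real.log x := by linarith
  have hApos : 0 < (1 - Real.log x) ^ a - (-Real.log x) ^ a :=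
    sub_pos.2 (Real.rpow_lt_rpow hQ.le (by linarith) ha)
  have hBpos : 0 < (-Real.log x) ^ (a-1) - (1 - Real.log x) ^ (a-1) :=
    sub_pos.2 (Real.rpow_lt_rpow_of_neg hQ (by linarith) (by linarith))
  have h1 : 0 < ((1 - Real.log x) ^ a - (-Real.log x) ^ a) ^ β := Real.rpow_pos_of_pos hApos β
  have h2 : 0 < ((1 - Real.log x) ^ a - (-Real.log x) ^ a) ^ (β - 1) :=
    Real.rpow_pos_of_pos hApos _
  positivity

private lemma E2_nonneg {a β x : ℝ} (ha : 0 < a) (ha1 : a < 1) (hβ : 0 < β)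
    (hx0 : 0 < x) (hx1 : x < 1) :
    0 ≤ a * β * x⁻¹ * ((1 - Real.log x) ^ a - (-Real.log x) ^ a) ^ (β - 2) *
        ( ((1 - Real.log x) ^ a - (-Real.log x) ^ a)
            * ((-Real.log x) ^ (a-1) - (1 - Real.log x) ^ (a-1))
          + a * (β-1) * ((-Real.log x) ^ (a-1) - (1 - Real.log x) ^ (a-1)) ^ 2
          + (1-a) * ((1 - Real.log x) ^ a - (-Real.log x) ^ a)
            * ((-Real.log x) ^ (a-2) - (1 - Real.log x) ^ (a-2)) ) := by
  have hlog : Real.log x < 0 := Real.log_neg hx0 hx1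
  have hP : (0:ℝ) < 1 - Real.log x := by linarith
  have hQ : (0:ℝ) < -Real.log x := by linarith
  have hApos : 0 < (1 - Real.log x) ^ a - (-Real.log x) ^ a :=
    sub_pos.2 (Real.rpow_lt_rpow hQ.le (by linarith) ha)
  have hBpos : 0 < (-Real.log x) ^ (a-1) - (1 - Real.log x) ^ (a-1) :=
    sub_pos.2 (Real.rpow_lt_rpow_of_neg hQ (by linarith) (by linarith))
  have hkey := key3 (p := 1 - Real.log x) (q := -Real.log x) ha ha1 hQ (by linarith)
  have hK : 0 ≤ ((1 - Real.log x) ^ a - (-Real.log x) ^ a)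
            * ((-Real.log x) ^ (a-1) - (1 - Real.log x) ^ (a-1))
          + a * (β-1) * ((-Real.log x) ^ (a-1) - (1 - Real.log x) ^ (a-1)) ^ 2
          + (1-a) * ((1 - Real.log x) ^ a - (-Real.log x) ^ a)
            * ((-Real.log x) ^ (a-2) - (1 - Real.log x) ^ (a-2)) := by
    nlinarith [mul_pos hApos hBpos, mul_pos hβ (mul_pos ha (mul_pos hBpos hBpos))]
  have h2 : 0 < ((1 - Real.log x) ^ a - (-Real.log x) ^ a) ^ (β - 2) :=
    Real.rpow_pos_of_pos hApos _
  positivity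

private lemma cont_g {a β : ℝ} (ha : 0 ≤ a) (hβ : 0 ≤ β) :
    ContinuousOn (fun x : ℝ => x * ((1 - Real.log x) ^ a - (-Real.log x) ^ a) ^ β)
      (Set.Ioc (0:ℝ) 1) := by
  intro x hx
  have hx0 : 0 < x := hx.1
  have hlog : ContinuousAt Real.log x := Real.continuousAt_log hx0.ne'
  exact (continuousAt_id.mul
    ((((continuousAt_const.sub hlog).rpow_const (Or.inr ha)).sub
      (hlog.neg.rpow_const (Or.inr ha))).rpow_const (Or.inr hβ))).continuousWithinAt


/-- for `δ > 1`, `α ∈ (0,1)`, the function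
`g(x) = x[(1-log x)^{1/δ} - (-log x)^{1/δ}]^{δ-α}` is convex and strictly increasing on
`(0,1]`. -/
theorem g_convex_strictMono
    (δ α : ℝ) (hδ : 1 < δ) (hα : α ∈ Set.Ioo (0:ℝ) 1) :
    ConvexOn ℝ (Set.Ioc (0:ℝ) 1)
        (fun x : ℝ =>
          x * ((1 - Real.log x) ^ (1/δ) - (-Real.log x) ^ (1/δ)) ^ (δ - α)) ∧
    StrictMonoOn
        (fun x : ℝ =>
          x * ((1 - Real.log x) ^ (1/δ) - (-Real.log x) ^ (1/δ)) ^ (δ - α))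
        (Set.Ioc (0:ℝ) 1) := by
  obtain ⟨hα0, hα1⟩ := hα
  have hδ0 : (0:ℝ) < δ := lt_trans one_pos hδ
  have ha : 0 < 1/δ := by positivity
  have ha1 : 1/δ < 1 := by rw [div_lt_one hδ0]; exact hδ
  have hβ : 0 < δ - α := by linarith
  constructor
  · refine convexOn_of_hasDerivWithinAt2_nonneg (convex_Ioc 0 1) (cont_g ha.le hβ.le)
      (f' := fun x : ℝ => ((1 - Real.log x) ^ (1/δ) - (-Real.log x) ^ (1/δ)) ^ (δ - α)
        + (1/δ) * (δ - α) * (((1 - Real.log x) ^ (1/δ) - (-Real.log x) ^ (1/δ)) ^ (δ - α - 1)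
          * ((-Real.log x) ^ (1/δ-1) - (1 - Real.log x) ^ (1/δ-1))))
      (f'' := fun x : ℝ => (1/δ) * (δ - α) * x⁻¹
          * ((1 - Real.log x) ^ (1/δ) - (-Real.log x) ^ (1/δ)) ^ (δ - α - 2) *
        ( ((1 - Real.log x) ^ (1/δ) - (-Real.log x) ^ (1/δ))
            * ((-Real.log x) ^ (1/δ-1) - (1 - Real.log x) ^ (1/δ-1))
          + (1/δ) * (δ - α - 1) * ((-Real.log x) ^ (1/δ-1) - (1 - Real.log x) ^ (1/δ-1)) ^ 2
          + (1-1/δ) * ((1 - Real.log x) ^ (1/δ) - (-Real.log x) ^ (1/δ))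
            * ((-Real.log x) ^ (1/δ-2) - (1 - Real.log x) ^ (1/δ-2)) ))
      ?_ ?_ ?_ <;> rw [interior_Ioc] <;> intro x hx
    · exact (hasDerivAt_gfun ha hx.1 hx.2).hasDerivWithinAt
    · exact (hasDerivAt_Efun ha hx.1 hx.2).hasDerivWithinAt
    · exact E2_nonneg ha ha1 hβ hx.1 hx.2
  · refine strictMonoOn_of_deriv_pos (convex_Ioc 0 1) (cont_g ha.le hβ.le) ?_
    rw [interior_Ioc]
    intro x hx
    rw [(hasDerivAt_gfun ha hx.1 hx.2).deriv]
    exact E_pos ha ha1 hβ hx.1 hx.2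
end

section
/- Let κ ∈ (0,1). Then for every z > 0, (κ − 1)[(1+z)^{κ−2} − z^{κ−2}][(1+z)^κ − z^κ] − κ[(1+z)^{κ−1} − z^{κ−1}]² ≥ 0, i.e. (κ − 1)[(1+z)^{κ−2} − z^{κ−2}][(1+z)^κ − z^κ] ≥ κ[(1+z)^{κ−1} − z^{κ−1}]². Equivalently, for every a ≥ 1, (κ−1)(a^{κ−2} − 1)(a^κ − 1) ≥ κ(a^{κ−1} − 1)². -/
open Set

open MeasureTheory intervalIntegral Real in
theorem key_a_aux (κ : ℝ) (hκ0 : 0 < κ) (hκ1 : κ < 1) (a : ℝ) (ha : 1 ≤ a) :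
    κ * (a ^ (κ - 1) - 1) ^ 2 ≤ (κ - 1) * (a ^ (κ - 2) - 1) * (a ^ κ - 1) := by
  set μ := volume.restrict (Set.Ioc (1:ℝ) a) with hμ
  haveI : IsFiniteMeasure μ := ⟨by
    rw [hμ, Measure.restrict_apply_univ]; exact measure_Ioc_lt_top⟩
  have h0 : (0:ℝ) ∉ Set.uIcc 1 a := by
    rw [Set.uIcc_of_le ha]; exact fun h => by linarith [h.1]
  -- integral values
  have hI : ∀ s : ℝ, s + 1 ≠ 0 →
      (s + 1) * ∫ x in (1:ℝ)..a, x ^ s = a ^ (s + 1) - 1 := by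
    intro s hs
    rw [integral_rpow (Or.inr ⟨by intro h; apply hs; rw [h]; ring, h0⟩), Real.one_rpow]
    field_simp
  -- measurability and Memℒp
  have hm : ∀ r : ℝ, AEStronglyMeasurable (fun x : ℝ => x ^ r) μ := by
    intro r
    exact (ContinuousOn.aestronglyMeasurable (fun x hx =>
      (Real.continuousAt_rpow_const x r (Or.inl (by linarith [hx.1]))).continuousWithinAt)
      measurableSet_Ioc)
  have hbd : ∀ r : ℝ, r ≤ 0 → MemLp (fun x : ℝ => x ^ r) (ENNReal.ofReal 2) μ := by
    intro r hr
    refine MemLp.of_bound (hm r) 1 ?_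
    rw [hμ]
    refine (ae_restrict_iff' measurableSet_Ioc).2 (ae_of_all _ fun x hx => ?_)
    have hx1 : (1:ℝ) ≤ x := hx.1.le
    rw [Real.norm_eq_abs, abs_of_nonneg (Real.rpow_nonneg (by linarith) r)]
    exact Real.rpow_le_one_of_one_le_of_nonpos hx1 hr
  have hnn : ∀ r : ℝ, 0 ≤ᵐ[μ] (fun x : ℝ => x ^ r) := by
    intro r
    rw [hμ]
    refine (ae_restrict_iff' measurableSet_Ioc).2 (ae_of_all _ fun x hx => ?_)
    exact Real.rpow_nonneg (by linarith [hx.1]) r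
  have hconj : (2:ℝ).HolderConjugate 2 := Real.holderConjugate_iff.mpr ⟨one_lt_two, by norm_num⟩
  have hold := integral_mul_le_Lp_mul_Lq_of_nonneg hconj (hnn ((κ-3)/2)) (hnn ((κ-1)/2))
      (hbd ((κ-3)/2) (by linarith)) (hbd ((κ-1)/2) (by linarith))
  -- rewrite the three integrals
  have e1 : ∫ x, (fun x : ℝ => x ^ ((κ-3)/2)) x * (fun x : ℝ => x ^ ((κ-1)/2)) x ∂μ
      = ∫ x in (1:ℝ)..a, x ^ (κ - 2) := by
    rw [intervalIntegral.integral_of_le ha, hμ]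
    refine setIntegral_congr_fun measurableSet_Ioc fun x hx => ?_
    show x ^ ((κ-3)/2) * x ^ ((κ-1)/2) = x ^ (κ - 2)
    rw [← Real.rpow_add (by linarith [hx.1] : (0:ℝ) < x),
      show (κ-3)/2 + (κ-1)/2 = κ - 2 by ring]
  have e2 : ∫ x, (fun x : ℝ => x ^ ((κ-3)/2)) x ^ (2:ℝ) ∂μ = ∫ x in (1:ℝ)..a, x ^ (κ - 3) := by
    rw [intervalIntegral.integral_of_le ha, hμ]
    refine setIntegral_congr_fun measurableSet_Ioc fun x hx => ?_
    show (x ^ ((κ-3)/2)) ^ (2:ℝ) = x ^ (κ - 3)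
    rw [← Real.rpow_mul (by linarith [hx.1] : (0:ℝ) ≤ x),
      show (κ-3)/2 * 2 = κ - 3 by ring]
  have e3 : ∫ x, (fun x : ℝ => x ^ ((κ-1)/2)) x ^ (2:ℝ) ∂μ = ∫ x in (1:ℝ)..a, x ^ (κ - 1) := by
    rw [intervalIntegral.integral_of_le ha, hμ]
    refine setIntegral_congr_fun measurableSet_Ioc fun x hx => ?_
    show (x ^ ((κ-1)/2)) ^ (2:ℝ) = x ^ (κ - 1)
    rw [← Real.rpow_mul (by linarith [hx.1] : (0:ℝ) ≤ x),
      show (κ-1)/2 * 2 = κ - 1 by ring]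
  rw [e1, e2, e3] at hold
  set I1 := ∫ x in (1:ℝ)..a, x ^ (κ - 3) with hI1
  set I2 := ∫ x in (1:ℝ)..a, x ^ (κ - 2) with hI2
  set I3 := ∫ x in (1:ℝ)..a, x ^ (κ - 1) with hI3
  have h1nn : 0 ≤ I1 := intervalIntegral.integral_nonneg ha
    (fun u hu => Real.rpow_nonneg (by linarith [hu.1]) _)
  have h2nn : 0 ≤ I2 := intervalIntegral.integral_nonneg ha
    (fun u hu => Real.rpow_nonneg (by linarith [hu.1]) _)
  have h3nn : 0 ≤ I3 := intervalIntegral.integral_nonneg ha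
    (fun u hu => Real.rpow_nonneg (by linarith [hu.1]) _)
  have hhalf : ∀ x : ℝ, 0 ≤ x → x ^ ((1:ℝ)/2) * x ^ ((1:ℝ)/2) = x := by
    intro x hx
    rw [← Real.rpow_add' hx (by norm_num)]
    norm_num
  have hcs : I2 ^ 2 ≤ I1 * I3 := by
    have hmm : I2 * I2 ≤ (I1 ^ ((1:ℝ)/2) * I3 ^ ((1:ℝ)/2)) * (I1 ^ ((1:ℝ)/2) * I3 ^ ((1:ℝ)/2)) :=
      mul_le_mul hold hold h2nn (by positivity)
    calc I2 ^ 2 = I2 * I2 := sq I2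
      _ ≤ (I1 ^ ((1:ℝ)/2) * I3 ^ ((1:ℝ)/2)) * (I1 ^ ((1:ℝ)/2) * I3 ^ ((1:ℝ)/2)) := hmm
      _ = (I1 ^ ((1:ℝ)/2) * I1 ^ ((1:ℝ)/2)) * (I3 ^ ((1:ℝ)/2) * I3 ^ ((1:ℝ)/2)) := by ring
      _ = I1 * I3 := by rw [hhalf I1 h1nn, hhalf I3 h3nn]
  have E1 : (κ - 2) * I1 = a ^ (κ - 2) - 1 := by
    have := hI (κ-3) (by linarith)
    rw [show κ - 3 + 1 = κ - 2 by ring] at this; exact this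
  have E2 : (κ - 1) * I2 = a ^ (κ - 1) - 1 := by
    have := hI (κ-2) (by linarith)
    rw [show κ - 2 + 1 = κ - 1 by ring] at this; exact this
  have E3 : κ * I3 = a ^ κ - 1 := by
    have := hI (κ-1) (by linarith)
    rw [show κ - 1 + 1 = κ by ring] at this; exact this
  rw [← E1, ← E2, ← E3]
  have hint1 : κ * (κ-1)^2 * I2^2 ≤ κ * (κ-1)^2 * (I1 * I3) :=
    mul_le_mul_of_nonneg_left hcs (mul_nonneg hκ0.le (sq_nonneg _))
  have hint2 : 0 ≤ κ * (1 - κ) * (I1 * I3) :=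
    mul_nonneg (mul_nonneg hκ0.le (by linarith)) (mul_nonneg h1nn h3nn)
  nlinarith [hint1, hint2]

/-- for `κ ∈ (0,1)` and `z > 0`,
`(κ-1)[(1+z)^{κ-2} - z^{κ-2}][(1+z)^κ - z^κ] ≥ κ[(1+z)^{κ-1} - z^{κ-1}]²`;
equivalently, for every `a ≥ 1`, `(κ-1)(a^{κ-2}-1)(a^κ-1) ≥ κ(a^{κ-1}-1)²`. -/
theorem kappa_inequality (κ : ℝ) (hκ : κ ∈ Set.Ioo (0:ℝ) 1) :
    (∀ z : ℝ, 0 < z →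
      κ * ((1 + z) ^ (κ - 1) - z ^ (κ - 1)) ^ 2 ≤
        (κ - 1) * ((1 + z) ^ (κ - 2) - z ^ (κ - 2)) * ((1 + z) ^ κ - z ^ κ)) ∧
    (∀ a : ℝ, 1 ≤ a →
      κ * (a ^ (κ - 1) - 1) ^ 2 ≤
        (κ - 1) * (a ^ (κ - 2) - 1) * (a ^ κ - 1)) := by
  obtain ⟨hκ0, hκ1⟩ := hκ
  refine ⟨?_, fun a ha => key_a_aux κ hκ0 hκ1 a ha⟩
  intro z hz
  set a := (1 + z) / z with haz
  have ha : 1 ≤ a := by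
    rw [haz, le_div_iff₀ hz]; linarith
  have ha0 : 0 ≤ a := by linarith
  have hrw : ∀ s : ℝ, (1 + z) ^ s - z ^ s = z ^ s * (a ^ s - 1) := by
    intro s
    rw [mul_sub, mul_one, ← Real.mul_rpow hz.le ha0, haz, mul_div_cancel₀ _ (ne_of_gt hz)]
  have hk := key_a_aux κ hκ0 hκ1 a ha
  have hzz : z ^ (κ-1) * z ^ (κ-1) = z ^ (κ-2) * z ^ κ := by
    rw [← Real.rpow_add hz, ← Real.rpow_add hz]; ring_nf
  have hP : 0 < z ^ (κ-2) * z ^ κ :=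
    mul_pos (Real.rpow_pos_of_pos hz _) (Real.rpow_pos_of_pos hz _)
  calc κ * ((1 + z) ^ (κ - 1) - z ^ (κ - 1)) ^ 2
      = (z ^ (κ-2) * z ^ κ) * (κ * (a ^ (κ-1) - 1) ^ 2) := by
        rw [hrw (κ-1)]; rw [← hzz]; ring
    _ ≤ (z ^ (κ-2) * z ^ κ) * ((κ - 1) * (a ^ (κ-2) - 1) * (a ^ κ - 1)) :=
        mul_le_mul_of_nonneg_left hk hP.le
    _ = (κ - 1) * ((1 + z) ^ (κ - 2) - z ^ (κ - 2)) * ((1 + z) ^ κ - z ^ κ) := by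
        rw [hrw (κ-2), hrw κ]; ring
end

section
/- Let κ ∈ (0,1) and β > 0, and define f(z) = [(1+z)^κ − z^κ]^β for z > 0. Then f is positive and differentiable on (0,∞) with f′(z) < 0 for all z > 0, and f is twice differentiable with f″(z) ≥ f′(z) for all z > 0. -/
open Set

lemma auxA {κ : ℝ} (hκ0 : 0 < κ) (hκ1 : κ < 1) {t : ℝ} (ht : 1 ≤ t) :
    (2:ℝ) ≤ t ^ (κ - 1) + t := by
  have ht0 : 0 < t := lt_of_lt_of_le one_pos ht
  have h1 : t ^ ((κ-1)/2) * t ^ ((1:ℝ)/2) = t ^ (κ/2) := by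
    rw [← Real.rpow_add ht0]; ring_nf
  have h2 : (t ^ ((κ-1)/2))^2 = t ^ (κ - 1) := by
    rw [← Real.rpow_natCast (t ^ ((κ-1)/2)) 2, ← Real.rpow_mul ht0.le]; norm_num
  have h3 : (t ^ ((1:ℝ)/2))^2 = t := by
    rw [← Real.rpow_natCast (t ^ ((1:ℝ)/2)) 2, ← Real.rpow_mul ht0.le]; norm_num
  have h4 : (1:ℝ) ≤ t ^ (κ/2) := Real.one_le_rpow ht (by positivity)
  nlinarith [sq_nonneg (t ^ ((κ-1)/2) - t ^ ((1:ℝ)/2))]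

lemma auxB {κ : ℝ} (hκ0 : 0 < κ) (hκ1 : κ < 1) {t : ℝ} (ht : 1 ≤ t) :
    0 ≤ 2 * t ^ κ + κ * t ^ 2 - 2 * κ * t + κ - 2 := by
  set ψ : ℝ → ℝ := fun s => 2 * s ^ κ + κ * s ^ 2 - 2 * κ * s + κ - 2 with hψ
  have hd : ∀ s ∈ Set.Ici (1:ℝ),
      HasDerivAt ψ (2 * (κ * s ^ (κ-1)) + κ * (2 * s) - 2 * κ) s := by
    intro s hs
    have hs0 : s ≠ 0 := by have : (1:ℝ) ≤ s := hs; positivity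
    have h1 : HasDerivAt (fun s : ℝ => s ^ κ) (κ * s ^ (κ-1)) s :=
      Real.hasDerivAt_rpow_const (Or.inl hs0)
    have h2 : HasDerivAt (fun s : ℝ => s ^ 2) (2 * s) s := by
      simpa using hasDerivAt_pow 2 s
    have H := (((h1.const_mul 2).add ((h2.const_mul κ))).sub
      ((hasDerivAt_id s).const_mul (2*κ))).add_const (κ - 2)
    have hfun : ψ = fun s : ℝ => 2 * s ^ κ + κ * s ^ 2 - 2*κ*s + (κ - 2) := by
      funext x; rw [hψ]; ring
    rw [hfun]
    exact H.congr_deriv (by ring)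
  have hmono : MonotoneOn ψ (Set.Ici (1:ℝ)) := by
    apply monotoneOn_of_deriv_nonneg (convex_Ici 1)
    · exact fun s hs => ((hd s hs).continuousAt.continuousWithinAt)
    · intro s hs
      rw [interior_Ici] at hs
      exact ((hd s (Set.mem_Ici.mpr (le_of_lt hs))).differentiableAt).differentiableWithinAt
    · intro s hs
      rw [interior_Ici] at hs
      rw [(hd s (Set.mem_Ici.mpr hs.le)).deriv]
      have h1 : (2:ℝ) ≤ s ^ (κ-1) + s := auxA hκ0 hκ1 hs.le
      nlinarith [hκ0]
  have h1 : ψ 1 ≤ ψ t := hmono (le_refl (1:ℝ)) ht ht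
  simp only [hψ, Real.one_rpow] at h1
  linarith

lemma auxC {κ : ℝ} (hκ0 : 0 < κ) (hκ1 : κ < 1) {t : ℝ} (ht : 1 ≤ t) :
    0 ≤ 2*κ*t^(κ-1) - t^(2*κ-2) - 1 - (κ-1)*t^κ - (κ-1)*t^(κ-2) := by
  set φ : ℝ → ℝ := fun s => 2*κ*s^(κ-1) - s^(2*κ-2) - 1 - (κ-1)*s^κ - (κ-1)*s^(κ-2) with hφ
  have hd : ∀ s : ℝ, 0 < s →
      HasDerivAt φ (2*κ*((κ-1) * s^(κ-2)) - (2*κ-2)*s^(2*κ-3)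
        - (κ-1)*(κ * s^(κ-1)) - (κ-1)*((κ-2) * s^(κ-3))) s := by
    intro s hs
    have hs0 : s ≠ 0 := hs.ne'
    have h1 : HasDerivAt (fun s : ℝ => s ^ (κ-1)) ((κ-1) * s ^ (κ-1-1)) s :=
      Real.hasDerivAt_rpow_const (Or.inl hs0)
    have h2 : HasDerivAt (fun s : ℝ => s ^ (2*κ-2)) ((2*κ-2) * s ^ (2*κ-2-1)) s :=
      Real.hasDerivAt_rpow_const (Or.inl hs0)
    have h3 : HasDerivAt (fun s : ℝ => s ^ κ) (κ * s ^ (κ-1)) s :=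
      Real.hasDerivAt_rpow_const (Or.inl hs0)
    have h4 : HasDerivAt (fun s : ℝ => s ^ (κ-2)) ((κ-2) * s ^ (κ-2-1)) s :=
      Real.hasDerivAt_rpow_const (Or.inl hs0)
    have e1 : κ - 1 - 1 = κ - 2 := by ring
    have e2 : (2*κ-2) - 1 = 2*κ-3 := by ring
    have e3 : κ - 2 - 1 = κ - 3 := by ring
    rw [e1] at h1; rw [e2] at h2; rw [e3] at h4
    have := ((((h1.const_mul (2*κ)).sub h2).sub_const 1).sub (h3.const_mul (κ-1))).sub
      (h4.const_mul (κ-1))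
    exact this
  have hmono : MonotoneOn φ (Set.Ici (1:ℝ)) := by
    apply monotoneOn_of_deriv_nonneg (convex_Ici 1)
    · exact fun s hs => ((hd s (lt_of_lt_of_le one_pos hs)).continuousAt.continuousWithinAt)
    · intro s hs
      rw [interior_Ici] at hs
      exact ((hd s (lt_trans one_pos hs)).differentiableAt).differentiableWithinAt
    · intro s hs
      rw [interior_Ici] at hs
      have hs0 : 0 < s := lt_trans one_pos hs
      rw [(hd s hs0).deriv]
      -- rewrite all rpows in terms of u := s^(κ-3)
      have eψ := auxB hκ0 hκ1 hs.le
      have u_pos : 0 < s ^ (κ-3) := Real.rpow_pos_of_pos hs0 _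
      have e1 : s ^ (κ-2) = s ^ (κ-3) * s := by
        rw [show κ-2 = (κ-3)+1 by ring, Real.rpow_add_one hs0.ne']
      have e2 : s ^ (κ-1) = s ^ (κ-3) * s^2 := by
        rw [show κ-1 = (κ-3)+2 by ring, Real.rpow_add hs0, Real.rpow_two]
      have e3 : s ^ κ = s ^ (κ-3) * s^3 := by
        rw [show κ = (κ-3)+3 by ring, Real.rpow_add hs0, ← Real.rpow_natCast s 3]
        norm_num
      have e4 : s ^ (2*κ-3) = s ^ (κ-3) * (s ^ (κ-3) * s^3) := by
        rw [show 2*κ-3 = (κ-3)+κ by ring, Real.rpow_add hs0, e3]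
      rw [e1, e2, e4]
      rw [e3] at eψ
      nlinarith [mul_nonneg u_pos.le eψ, hκ0, hκ1, u_pos]
  have h1 : φ 1 ≤ φ t := hmono (le_refl (1:ℝ)) ht ht
  simp only [hφ, Real.one_rpow] at h1
  linarith

lemma auxD {κ : ℝ} (hκ0 : 0 < κ) (hκ1 : κ < 1) {a b : ℝ} (hb : 0 < b) (hab : b < a) :
    (κ*(a^(κ-1) - b^(κ-1)))^2 ≤ (a^κ - b^κ) * (κ*(κ-1)*(a^(κ-2) - b^(κ-2))) := by
  have ha : 0 < a := lt_trans hb hab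
  set t : ℝ := a / b with htdef
  have ht1 : 1 < t := (one_lt_div hb).2 hab
  have ht0 : 0 < t := lt_trans one_pos ht1
  have hsplit : ∀ s : ℝ, a ^ s = t ^ s * b ^ s := by
    intro s
    rw [htdef, Real.div_rpow ha.le hb.le, div_mul_cancel₀]
    exact (Real.rpow_pos_of_pos hb s).ne'
  have hφ := auxC hκ0 hκ1 ht1.le
  set T : ℝ := t ^ (κ-1) with hT
  set B : ℝ := b ^ (κ-1) with hB
  have hTpos : 0 < T := Real.rpow_pos_of_pos ht0 _
  have hBpos : 0 < B := Real.rpow_pos_of_pos hb _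
  have et1 : t ^ κ = T * t := by
    rw [hT, ← Real.rpow_add_one ht0.ne']; norm_num
  have et2 : t ^ (κ-2) = T / t := by
    rw [hT, eq_div_iff ht0.ne', ← Real.rpow_add_one ht0.ne', show κ-2+1 = κ-1 by ring]
  have et3 : t ^ (2*κ-2) = T ^ 2 := by
    rw [hT, ← Real.rpow_natCast (t ^ (κ-1)) 2, ← Real.rpow_mul ht0.le]
    norm_num; ring_nf
  have eb1 : b ^ κ = B * b := by
    rw [hB, ← Real.rpow_add_one hb.ne']; norm_num
  have eb2 : b ^ (κ-2) = B / b := by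
    rw [hB, eq_div_iff hb.ne', ← Real.rpow_add_one hb.ne', show κ-2+1 = κ-1 by ring]
  rw [hsplit κ, hsplit (κ-1), hsplit (κ-2), et1, et2, eb1, eb2, ← hT, ← hB]
  rw [et1, et2, et3] at hφ
  have key : (T*t*(B*b) - B*b) * (κ*(κ-1)*((T/t)*(B/b) - B/b)) - (κ*(T*B - B))^2
      = κ * B^2 * (2*κ*T - T^2 - 1 - (κ-1)*(T*t) - (κ-1)*(T/t)) := by
    field_simp
    ring
  nlinarith [mul_nonneg (mul_nonneg hκ0.le (sq_nonneg B)) hφ]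

/-- for `κ ∈ (0,1)`, `β > 0`, `f(z) = [(1+z)^κ - z^κ]^β` is positive and
differentiable on `(0,∞)` with `f'(z) < 0`, twice differentiable, and `f''(z) ≥ f'(z)`
for all `z > 0`. -/
theorem f_decreasing_and_second_derivative_bound
    (κ β : ℝ) (hκ : κ ∈ Set.Ioo (0:ℝ) 1) (hβ : 0 < β) :
    (∀ z : ℝ, 0 < z → 0 < ((1 + z) ^ κ - z ^ κ) ^ β) ∧
    (∀ z : ℝ, 0 < z →
      DifferentiableAt ℝ (fun z : ℝ => ((1 + z) ^ κ - z ^ κ) ^ β) z) ∧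
    (∀ z : ℝ, 0 < z →
      deriv (fun z : ℝ => ((1 + z) ^ κ - z ^ κ) ^ β) z < 0) ∧
    (∀ z : ℝ, 0 < z →
      DifferentiableAt ℝ (deriv fun z : ℝ => ((1 + z) ^ κ - z ^ κ) ^ β) z) ∧
    (∀ z : ℝ, 0 < z →
      deriv (fun z : ℝ => ((1 + z) ^ κ - z ^ κ) ^ β) z ≤
        deriv (deriv fun z : ℝ => ((1 + z) ^ κ - z ^ κ) ^ β) z) := by
  obtain ⟨hκ0, hκ1⟩ := hκ
  have hg_pos : ∀ z : ℝ, 0 < z → 0 < (1 + z) ^ κ - z ^ κ := by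
    intro z hz
    have := Real.rpow_lt_rpow hz.le (by linarith : z < 1 + z) hκ0
    linarith
  have hg'_neg : ∀ z : ℝ, 0 < z → κ * (1+z)^(κ-1) - κ * z^(κ-1) < 0 := by
    intro z hz
    have h := Real.rpow_lt_rpow_of_neg hz (by linarith : z < 1+z) (by linarith : κ - 1 < 0)
    nlinarith
  have hg''_pos : ∀ z : ℝ, 0 < z →
      0 < κ*((κ-1) * (1+z)^(κ-2)) - κ*((κ-1) * z^(κ-2)) := by
    intro z hz
    have h := Real.rpow_lt_rpow_of_neg hz (by linarith : z < 1+z) (by linarith : κ - 2 < 0)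
    nlinarith [mul_pos hκ0 (mul_pos (show (0:ℝ) < 1-κ by linarith)
      (show 0 < z^(κ-2)-(1+z)^(κ-2) by linarith))]
  -- derivative of g
  have hgd : ∀ z : ℝ, 0 < z → HasDerivAt (fun w : ℝ => (1+w)^κ - w^κ)
      (κ * (1+z)^(κ-1) - κ * z^(κ-1)) z := by
    intro z hz
    have h1 : HasDerivAt (fun w : ℝ => 1 + w) 1 z := (hasDerivAt_id z).const_add 1
    have h2 : HasDerivAt (fun w : ℝ => (1+w)^κ) (κ * (1+z)^(κ-1)) z := by
      have := (Real.hasDerivAt_rpow_const (x := 1+z) (p := κ)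
        (Or.inl (by positivity))).comp z h1
      exact this.congr_deriv (by ring)
    have h3 : HasDerivAt (fun w : ℝ => w ^ κ) (κ * z^(κ-1)) z :=
      Real.hasDerivAt_rpow_const (Or.inl hz.ne')
    exact h2.sub h3
  -- derivative of (1+w)^(κ-1), w^(κ-1)
  have hgd' : ∀ z : ℝ, 0 < z →
      HasDerivAt (fun w : ℝ => κ * (1+w)^(κ-1) - κ * w^(κ-1))
        (κ*((κ-1) * (1+z)^(κ-2)) - κ*((κ-1) * z^(κ-2))) z := by
    intro z hz
    have h1 : HasDerivAt (fun w : ℝ => 1 + w) 1 z := (hasDerivAt_id z).const_add 1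
    have h2 : HasDerivAt (fun w : ℝ => (1+w)^(κ-1)) ((κ-1) * (1+z)^(κ-1-1)) z := by
      have := (Real.hasDerivAt_rpow_const (x := 1+z) (p := κ-1)
        (Or.inl (by positivity))).comp z h1
      exact this.congr_deriv (by ring)
    have h3 : HasDerivAt (fun w : ℝ => w ^ (κ-1)) ((κ-1) * z^(κ-1-1)) z :=
      Real.hasDerivAt_rpow_const (Or.inl hz.ne')
    rw [show κ-1-1 = κ-2 by ring] at h2 h3
    exact (h2.const_mul κ).sub (h3.const_mul κ)
  -- derivative of f
  have hfd : ∀ z : ℝ, 0 < z →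
      HasDerivAt (fun w : ℝ => ((1 + w) ^ κ - w ^ κ) ^ β)
        ((κ * (1+z)^(κ-1) - κ * z^(κ-1)) * β * ((1+z)^κ - z^κ)^(β-1)) z := by
    intro z hz
    exact (hgd z hz).rpow_const (Or.inl (hg_pos z hz).ne')
  have hderiv_f : ∀ z : ℝ, 0 < z →
      deriv (fun w : ℝ => ((1 + w) ^ κ - w ^ κ) ^ β) z
        = (κ * (1+z)^(κ-1) - κ * z^(κ-1)) * β * ((1+z)^κ - z^κ)^(β-1) :=
    fun z hz => (hfd z hz).deriv
  -- first derivative as an explicit function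
  set D1 : ℝ → ℝ :=
    fun w => (κ * (1+w)^(κ-1) - κ * w^(κ-1)) * β * ((1+w)^κ - w^κ)^(β-1) with hD1def
  have hEq : ∀ z : ℝ, 0 < z →
      deriv (fun w : ℝ => ((1 + w) ^ κ - w ^ κ) ^ β) =ᶠ[nhds z] D1 := by
    intro z hz
    filter_upwards [Ioi_mem_nhds hz] with w hw
    exact hderiv_f w hw
  -- derivative of D1
  have hD1d : ∀ z : ℝ, 0 < z →
      HasDerivAt D1
        ((κ*((κ-1) * (1+z)^(κ-2)) - κ*((κ-1) * z^(κ-2))) * β * ((1+z)^κ - z^κ)^(β-1)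
          + ((κ * (1+z)^(κ-1) - κ * z^(κ-1)) * β) *
            ((κ * (1+z)^(κ-1) - κ * z^(κ-1)) * (β-1) * ((1+z)^κ - z^κ)^(β-1-1))) z := by
    intro z hz
    have hu : HasDerivAt (fun w : ℝ => (κ * (1+w)^(κ-1) - κ * w^(κ-1)) * β)
        ((κ*((κ-1) * (1+z)^(κ-2)) - κ*((κ-1) * z^(κ-2))) * β) z :=
      (hgd' z hz).mul_const β
    have hv : HasDerivAt (fun w : ℝ => ((1+w)^κ - w^κ)^(β-1))
        ((κ * (1+z)^(κ-1) - κ * z^(κ-1)) * (β-1) * ((1+z)^κ - z^κ)^(β-1-1)) z :=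
      (hgd z hz).rpow_const (Or.inl (hg_pos z hz).ne')
    exact hu.mul hv
  have hdd : ∀ z : ℝ, 0 < z →
      HasDerivAt (deriv (fun w : ℝ => ((1 + w) ^ κ - w ^ κ) ^ β))
        ((κ*((κ-1) * (1+z)^(κ-2)) - κ*((κ-1) * z^(κ-2))) * β * ((1+z)^κ - z^κ)^(β-1)
          + ((κ * (1+z)^(κ-1) - κ * z^(κ-1)) * β) *
            ((κ * (1+z)^(κ-1) - κ * z^(κ-1)) * (β-1) * ((1+z)^κ - z^κ)^(β-1-1))) z :=
    fun z hz => (hD1d z hz).congr_of_eventuallyEq (hEq z hz)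
  refine ⟨fun z hz => Real.rpow_pos_of_pos (hg_pos z hz) β,
    fun z hz => (hfd z hz).differentiableAt,
    fun z hz => ?_, fun z hz => (hdd z hz).differentiableAt, fun z hz => ?_⟩
  · rw [hderiv_f z hz]
    have hQ : 0 < ((1+z)^κ - z^κ)^(β-1) := Real.rpow_pos_of_pos (hg_pos z hz) _
    exact mul_neg_of_neg_of_pos (mul_neg_of_neg_of_pos (hg'_neg z hz) hβ) hQ
  · rw [hderiv_f z hz, (hdd z hz).deriv]
    set G : ℝ := (1+z)^κ - z^κ with hGdef
    set G' : ℝ := κ * (1+z)^(κ-1) - κ * z^(κ-1) with hG'def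
    set G2 : ℝ := κ*((κ-1) * (1+z)^(κ-2)) - κ*((κ-1) * z^(κ-2)) with hG2def
    have hG : 0 < G := hg_pos z hz
    have hG' : G' < 0 := hg'_neg z hz
    have hG2 : 0 < G2 := hg''_pos z hz
    have hP : 0 < G ^ (β-2) := Real.rpow_pos_of_pos hG _
    have e1 : G ^ (β-1-1) = G ^ (β-2) := by rw [show β-1-1 = β-2 by ring]
    have e2 : G ^ (β-1) = G ^ (β-2) * G := by
      rw [← Real.rpow_add_one hG.ne', show β-2+1 = β-1 by ring]
    have hkey : G' ^ 2 ≤ G * G2 := by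
      have h := auxD hκ0 hκ1 hz (by linarith : z < 1 + z)
      have e3 : G' = κ * ((1+z)^(κ-1) - z^(κ-1)) := by rw [hG'def]; ring
      have e4 : G2 = κ*(κ-1)*((1+z)^(κ-2) - z^(κ-2)) := by rw [hG2def]; ring
      rw [e3, e4, hGdef]
      exact h
    rw [e1, e2]
    have h5 : 0 ≤ G2 * G + (β-1) * G' ^ 2 := by nlinarith [sq_nonneg G']
    have h6 : 0 < -(G' * G) := by nlinarith
    nlinarith [mul_nonneg (mul_nonneg hβ.le hP.le) h5,
      mul_pos (mul_pos hβ hP) h6]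
end

section
/- For every b > 0 and every t ≥ 1, (1 − e^{−b/2})/(t b) ≤ (1/t²) ∫₀ᵗ ∫₀ᵗ exp(−b|s − u|) du ds ≤ 2/(t b). -/
open MeasureTheory Set Real

lemma exp_neg_integral (b c : ℝ) (hb : b ≠ 0) :
    ∫ x in (0:ℝ)..c, Real.exp (-b * x) = (1 - Real.exp (-b * c)) / b := by
  have h := intervalIntegral.integral_comp_mul_left (fun x => Real.exp x)
      (c := -b) (a := 0) (b := c) (neg_ne_zero.mpr hb)
  simp only [mul_zero] at h
  rw [h, integral_exp]
  simp only [Real.exp_zero, smul_eq_mul, inv_neg]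
  field_simp
  ring

lemma inner_calc (b s t : ℝ) (hb : 0 < b) (hs0 : 0 ≤ s) (hst : s ≤ t) :
    ∫ u in Set.Icc (0:ℝ) t, Real.exp (-b * |s - u|)
      = (1 - Real.exp (-b * s)) / b + (1 - Real.exp (-b * (t - s))) / b := by
  have h0t : (0:ℝ) ≤ t := le_trans hs0 hst
  rw [MeasureTheory.integral_Icc_eq_integral_Ioc,
      ← intervalIntegral.integral_of_le h0t]
  have hcont : ∀ a c : ℝ, IntervalIntegrable (fun u => Real.exp (-b * |s - u|)) volume a c := by
    intro a c
    exact (Continuous.intervalIntegrable (by continuity) a c)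
  rw [← intervalIntegral.integral_add_adjacent_intervals (hcont 0 s) (hcont s t)]
  have h1 : ∫ u in (0:ℝ)..s, Real.exp (-b * |s - u|)
      = ∫ u in (0:ℝ)..s, Real.exp (-b * (s - u)) := by
    apply intervalIntegral.integral_congr
    intro u hu
    rw [Set.uIcc_of_le hs0] at hu
    dsimp only
    rw [abs_of_nonneg (by linarith [hu.2])]
  have h2 : ∫ u in s..t, Real.exp (-b * |s - u|)
      = ∫ u in s..t, Real.exp (-b * (u - s)) := by
    apply intervalIntegral.integral_congr
    intro u hu
    rw [Set.uIcc_of_le hst] at hu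
    dsimp only
    rw [abs_of_nonpos (by linarith [hu.1]), neg_sub]
  rw [h1, h2]
  have e1 : ∫ u in (0:ℝ)..s, Real.exp (-b * (s - u))
      = (1 - Real.exp (-b * s)) / b := by
    have h := intervalIntegral.integral_comp_sub_left (fun x => Real.exp (-b * x)) s
      (a := 0) (b := s)
    rw [h, sub_self, sub_zero, exp_neg_integral b s hb.ne']
  have e2 : ∫ u in s..t, Real.exp (-b * (u - s))
      = (1 - Real.exp (-b * (t - s))) / b := by
    have h := intervalIntegral.integral_comp_sub_right (fun x => Real.exp (-b * x)) s
      (a := s) (b := t)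
    rw [h, sub_self, exp_neg_integral b (t - s) hb.ne']
  rw [e1, e2]

lemma inner_bounds (b s t : ℝ) (hb : 0 < b) (ht : 1 ≤ t) (hs : s ∈ Set.Icc (0:ℝ) t) :
    (1 - Real.exp (-b/2)) / b ≤ (∫ u in Set.Icc (0:ℝ) t, Real.exp (-b * |s - u|)) ∧
    (∫ u in Set.Icc (0:ℝ) t, Real.exp (-b * |s - u|)) ≤ 2 / b := by
  obtain ⟨hs0, hst⟩ := hs
  rw [inner_calc b s t hb hs0 hst]
  have hA : 0 ≤ (1 - Real.exp (-b * s)) / b := by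
    apply div_nonneg _ hb.le
    have : Real.exp (-b * s) ≤ 1 := Real.exp_le_one_iff.mpr (by nlinarith)
    linarith
  have hB : 0 ≤ (1 - Real.exp (-b * (t - s))) / b := by
    apply div_nonneg _ hb.le
    have : Real.exp (-b * (t - s)) ≤ 1 := Real.exp_le_one_iff.mpr (by nlinarith)
    linarith
  constructor
  · rcases le_or_gt (1/2 : ℝ) s with h | h
    · have hle : (1 - Real.exp (-b/2)) / b ≤ (1 - Real.exp (-b * s)) / b := by
        refine (div_le_div_iff_of_pos_right hb).mpr ?_
        have := Real.exp_le_exp.mpr (show -b * s ≤ -b/2 by nlinarith)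
        linarith
      linarith
    · have h2 : (1/2 : ℝ) ≤ t - s := by linarith
      have hle : (1 - Real.exp (-b/2)) / b ≤ (1 - Real.exp (-b * (t - s))) / b := by
        refine (div_le_div_iff_of_pos_right hb).mpr ?_
        have := Real.exp_le_exp.mpr (show -b * (t - s) ≤ -b/2 by nlinarith)
        linarith
      linarith
  · have h1 : (1 - Real.exp (-b * s)) / b ≤ 1 / b := by
      refine (div_le_div_iff_of_pos_right hb).mpr ?_
      have := Real.exp_pos (-b * s); linarith
    have h2 : (1 - Real.exp (-b * (t - s))) / b ≤ 1 / b := by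
      refine (div_le_div_iff_of_pos_right hb).mpr ?_
      have := Real.exp_pos (-b * (t - s)); linarith
    have : (1:ℝ)/b + 1/b = 2/b := by ring
    linarith

/-- for every `b > 0` and `t ≥ 1`,
`(1 - e^{-b/2})/(tb) ≤ (1/t²) ∫₀ᵗ∫₀ᵗ e^{-b|s-u|} du ds ≤ 2/(tb)`,
where the double integral is the Lebesgue integral over the square `[0,t]²`. -/
theorem exp_abs_double_integral_bounds (b t : ℝ) (hb : 0 < b) (ht : 1 ≤ t) :
    (1 - Real.exp (-b/2)) / (t * b) ≤
      (1 / t ^ 2) *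
        ∫ x in Set.Icc (0:ℝ) t ×ˢ Set.Icc (0:ℝ) t, Real.exp (-b * |x.1 - x.2|) ∧
    (1 / t ^ 2) *
        (∫ x in Set.Icc (0:ℝ) t ×ˢ Set.Icc (0:ℝ) t, Real.exp (-b * |x.1 - x.2|))
      ≤ 2 / (t * b) := by
  have ht0 : (0:ℝ) < t := lt_of_lt_of_le one_pos ht
  have hfc : Continuous fun x : ℝ × ℝ => Real.exp (-b * |x.1 - x.2|) := by continuity
  have hcomp : IsCompact (Set.Icc (0:ℝ) t ×ˢ Set.Icc (0:ℝ) t) :=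
    isCompact_Icc.prod isCompact_Icc
  have hInt : IntegrableOn (fun x : ℝ × ℝ => Real.exp (-b * |x.1 - x.2|))
      (Set.Icc (0:ℝ) t ×ˢ Set.Icc (0:ℝ) t) volume :=
    hfc.continuousOn.integrableOn_compact hcomp
  have hInt' : IntegrableOn (fun x : ℝ × ℝ => Real.exp (-b * |x.1 - x.2|))
      (Set.Icc (0:ℝ) t ×ˢ Set.Icc (0:ℝ) t) ((volume : Measure ℝ).prod volume) := by
    rwa [← MeasureTheory.Measure.volume_eq_prod]
  have key : (∫ x in Set.Icc (0:ℝ) t ×ˢ Set.Icc (0:ℝ) t, Real.exp (-b * |x.1 - x.2|))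
      = ∫ s in Set.Icc (0:ℝ) t, ∫ u in Set.Icc (0:ℝ) t, Real.exp (-b * |s - u|) := by
    rw [MeasureTheory.Measure.volume_eq_prod]
    exact MeasureTheory.setIntegral_prod _ hInt'
  set g : ℝ → ℝ := fun s => ∫ u in Set.Icc (0:ℝ) t, Real.exp (-b * |s - u|) with hg
  have hgInt : IntegrableOn g (Set.Icc (0:ℝ) t) volume := by
    have := hInt'
    rw [IntegrableOn, ← MeasureTheory.Measure.prod_restrict] at this
    exact this.integral_prod_left
  have hmeas : (volume (Set.Icc (0:ℝ) t)).toReal = t := by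
    rw [Real.volume_Icc, sub_zero, ENNReal.toReal_ofReal ht0.le]
  have hconst : ∀ c : ℝ, (∫ _ in Set.Icc (0:ℝ) t, c) = t * c := by
    intro c
    rw [MeasureTheory.setIntegral_const, measureReal_def, hmeas, smul_eq_mul]
  have hlow : t * ((1 - Real.exp (-b/2)) / b) ≤ ∫ s in Set.Icc (0:ℝ) t, g s := by
    rw [← hconst]
    apply MeasureTheory.setIntegral_mono_on (integrableOn_const (by simp [Real.volume_Icc]))
      hgInt measurableSet_Icc
    intro s hs
    exact (inner_bounds b s t hb ht hs).1
  have hup : (∫ s in Set.Icc (0:ℝ) t, g s) ≤ t * (2 / b) := by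
    rw [← hconst]
    apply MeasureTheory.setIntegral_mono_on hgInt
      (integrableOn_const (by simp [Real.volume_Icc])) measurableSet_Icc
    intro s hs
    exact (inner_bounds b s t hb ht hs).2
  rw [key]
  constructor
  · calc (1 - Real.exp (-b/2)) / (t * b)
        = (1 / t ^ 2) * (t * ((1 - Real.exp (-b/2)) / b)) := by field_simp
      _ ≤ (1 / t ^ 2) * ∫ s in Set.Icc (0:ℝ) t, g s := by
          apply mul_le_mul_of_nonneg_left hlow (by positivity)
  · calc (1 / t ^ 2) * (∫ s in Set.Icc (0:ℝ) t, g s)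
        ≤ (1 / t ^ 2) * (t * (2 / b)) := mul_le_mul_of_nonneg_left hup (by positivity)
      _ = 2 / (t * b) := by field_simp
end
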